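/- arXiv:0706.1750 — 15 statements merged into one kernel-verified Lean document; each statement's English description precedes it below -/
import Mathlib

section
/- Let U ⊆ ℂ be open with 0 ∉ U, let m, m̃ : U → ℂ and w1, w2, w3, w̃1, w̃2, w̃3 : U → ℂ all be differentiable, and for t ∈ U define the 3×3 complex matrices B1(t) = [[m̃, w̃3, w2],[0,0,0],[0,0,0]], B2(t) = [[0,0,0],[w3, m, w̃1],[0,0,0]], B3(t) = [[0,0,0],[0,0,0],[w̃2/2, w1/2, −1/2]], M∞(t) = [[1/2, −w̃3/t, 0],[−w3/t, −1/2, 0],[w̃2/2, −w1/2, 0]], and A(λ,t) = B1(t)/(λ+t) + B2(t)/(λ−t) + (1/2)·I + B3(t), M(λ,t) = B1(t)/(λ+t) − B2(t)/(λ−t) + M∞(t). Then the zero-curvature (compatibility) identity ∂A/∂t (λ,t) − ∂M/∂λ (λ,t) + A(λ,t)M(λ,t) − M(λ,t)A(λ,t) = 0, required for all t ∈ U and all λ ∈ ℂ with λ ≠ t and λ ≠ −t, holds if and only if on U one has m′ = 0, m̃′ = 0, and the system (P5sys): t·w1′ = w̃2·w̃3, t·w̃1′ = −w2·w3, t·w2′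 = −w̃1·w̃3, t·w̃2′ = w1·w3, t·w3′ = −(t − (m − m̃))·w3 − t·w̃1·w̃2, t·w̃3′ = (t − (m − m̃))·w̃3 + t·w1·w2. -/
lemma hd_gen (lam t c f' g' h' : ℂ) (f g h : ℂ → ℂ)
    (hf : HasDerivAt f f' t) (hg : HasDerivAt g g' t) (hh : HasDerivAt h h' t)
    (h1 : lam + t ≠ 0) (h2 : lam - t ≠ 0) :
    HasDerivAt (fun s => (lam + s)⁻¹ * f s + (lam - s)⁻¹ * g s + c + h s)
      (-(((lam + t) ^ 2)⁻¹ * f t) + (lam + t)⁻¹ * f'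
        + ((lam - t) ^ 2)⁻¹ * g t + (lam - t)⁻¹ * g' + h') t := by
  have H1 : HasDerivAt (fun s : ℂ => (lam + s)⁻¹) (-1 / (lam + t) ^ 2) t := by
    simpa using ((hasDerivAt_id t).const_add lam).fun_inv h1
  have H2 : HasDerivAt (fun s : ℂ => (lam - s)⁻¹) (-(-1) / (lam - t) ^ 2) t := by
    simpa using ((hasDerivAt_id t).const_sub lam).fun_inv h2
  have key := (((H1.fun_mul hf).fun_add (H2.fun_mul hg)).add_const c).fun_add hh
  refine key.congr_deriv ?_
  ring

lemma hd_gen2 (t x y z lam : ℂ) (h1 : lam + t ≠ 0) (h2 : lam - t ≠ 0) :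
    HasDerivAt (fun mu : ℂ => (mu + t)⁻¹ * x - (mu - t)⁻¹ * y + z)
      (-(((lam + t) ^ 2)⁻¹ * x) + ((lam - t) ^ 2)⁻¹ * y) lam := by
  have H1 : HasDerivAt (fun mu : ℂ => (mu + t)⁻¹) (-1 / (lam + t) ^ 2) lam := by
    simpa using ((hasDerivAt_id lam).add_const t).fun_inv h1
  have H2 : HasDerivAt (fun mu : ℂ => (mu - t)⁻¹) (-1 / (lam - t) ^ 2) lam := by
    simpa using ((hasDerivAt_id lam).sub_const t).fun_inv h2
  have key := (((H1.mul_const x).fun_sub (H2.mul_const y)).add_const z)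
  refine key.congr_deriv ?_
  ring

set_option maxHeartbeats 1000000 in
lemma step1
    (m mt w1 w2 w3 wt1 wt2 wt3 : ℂ → ℂ) (t lam : ℂ)
    (ht0 : t ≠ 0) (h1 : lam + t ≠ 0) (h2 : lam - t ≠ 0)
    (hm : DifferentiableAt ℂ m t) (hmt : DifferentiableAt ℂ mt t)
    (hw1 : DifferentiableAt ℂ w1 t) (hw2 : DifferentiableAt ℂ w2 t)
    (hw3 : DifferentiableAt ℂ w3 t) (hwt1 : DifferentiableAt ℂ wt1 t)
    (hwt2 : DifferentiableAt ℂ wt2 t) (hwt3 : DifferentiableAt ℂ wt3 t)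
    (B1 B2 B3 Minf : ℂ → Matrix (Fin 3) (Fin 3) ℂ)
    (hB1 : ∀ t, B1 t = !![mt t, wt3 t, w2 t; 0, 0, 0; 0, 0, 0])
    (hB2 : ∀ t, B2 t = !![0, 0, 0; w3 t, m t, wt1 t; 0, 0, 0])
    (hB3 : ∀ t, B3 t = !![0, 0, 0; 0, 0, 0; wt2 t / 2, w1 t / 2, -(1/2)])
    (hMinf : ∀ t, Minf t =
      !![1/2, -(wt3 t) / t, 0; -(w3 t) / t, -(1/2), 0; wt2 t / 2, -(w1 t) / 2, 0])
    (A M : ℂ → ℂ → Matrix (Fin 3) (Fin 3) ℂ)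
    (hA : ∀ lam t, A lam t =
      (lam + t)⁻¹ • B1 t + (lam - t)⁻¹ • B2 t
        + (2 : ℂ)⁻¹ • (1 : Matrix (Fin 3) (Fin 3) ℂ) + B3 t)
    (hM : ∀ lam t, M lam t = (lam + t)⁻¹ • B1 t - (lam - t)⁻¹ • B2 t + Minf t)
    (i j : Fin 3) :
    deriv (fun s => A lam s i j) t - deriv (fun mu => M mu t i j) lam
      + ((A lam t * M lam t) i j - (M lam t * A lam t) i j)
    = (lam + t)⁻¹ *
        (!![deriv mt t,
            deriv wt3 t - ((t - (m t - mt t)) * wt3 t + t * (w1 t * w2 t)) / t,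
            deriv w2 t + wt1 t * wt3 t / t;
            0, 0, 0; 0, 0, 0] i j)
      + (lam - t)⁻¹ *
        (!![0, 0, 0;
            deriv w3 t + ((t - (m t - mt t)) * w3 t + t * (wt1 t * wt2 t)) / t,
            deriv m t,
            deriv wt1 t + w2 t * w3 t / t;
            0, 0, 0] i j)
      + (!![0, 0, 0; 0, 0, 0;
            (t * deriv wt2 t - w1 t * w3 t) / t / 2,
            (t * deriv w1 t - wt2 t * wt3 t) / t / 2, 0] i j) := by
  have hdB1 : HasDerivAt (fun s => B1 s i j)
      (!![deriv mt t, deriv wt3 t, deriv w2 t; 0, 0, 0; 0, 0, 0] i j) t := by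
    simp only [hB1]
    fin_cases i <;> fin_cases j <;> simp <;>
      first
        | exact hmt | exact hwt3 | exact hw2 | exact hasDerivAt_const _ _
  have hdB2 : HasDerivAt (fun s => B2 s i j)
      (!![0, 0, 0; deriv w3 t, deriv m t, deriv wt1 t; 0, 0, 0] i j) t := by
    simp only [hB2]
    fin_cases i <;> fin_cases j <;> simp <;>
      first
        | exact hm | exact hw3 | exact hwt1 | exact hasDerivAt_const _ _
  have hdB3 : HasDerivAt (fun s => B3 s i j)
      (!![0, 0, 0; 0, 0, 0; deriv wt2 t / 2, deriv w1 t / 2, 0] i j) t := by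
    simp only [hB3]
    fin_cases i <;> fin_cases j <;> simp <;>
      first
        | exact (hwt2.hasDerivAt.div_const 2) | exact (hw1.hasDerivAt.div_const 2)
        | exact (hwt2.div_const 2) | exact (hw1.div_const 2)
        | exact hasDerivAt_const _ _
  have eA : (fun s => A lam s i j)
      = (fun s => (lam + s)⁻¹ * B1 s i j + (lam - s)⁻¹ * B2 s i j
          + 2⁻¹ * (1 : Matrix (Fin 3) (Fin 3) ℂ) i j + B3 s i j) := by
    funext s
    simp [hA, Matrix.add_apply, Matrix.smul_apply, smul_eq_mul]
  have eM : (fun mu => M mu t i j)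
      = (fun mu => (mu + t)⁻¹ * B1 t i j - (mu - t)⁻¹ * B2 t i j + Minf t i j) := by
    funext mu
    simp [hM, Matrix.sub_apply, Matrix.add_apply, Matrix.smul_apply, smul_eq_mul]
  have HA := (hd_gen lam t (2⁻¹ * (1 : Matrix (Fin 3) (Fin 3) ℂ) i j) _ _ _
      _ _ _ hdB1 hdB2 hdB3 h1 h2)
  have HM := hd_gen2 t (B1 t i j) (B2 t i j) (Minf t i j) lam h1 h2
  have hAe : A lam t = !![(lam + t)⁻¹ * mt t + 2⁻¹, (lam + t)⁻¹ * wt3 t, (lam + t)⁻¹ * w2 t;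
      (lam - t)⁻¹ * w3 t, (lam - t)⁻¹ * m t + 2⁻¹, (lam - t)⁻¹ * wt1 t;
      wt2 t / 2, w1 t / 2, 0] := by
    rw [hA, hB1, hB2, hB3, Matrix.one_fin_three]
    ext i j
    fin_cases i <;> fin_cases j <;>
      simp [Matrix.vecHead, Matrix.vecTail] <;> ring
  have hMe : M lam t = !![(lam + t)⁻¹ * mt t + 1/2, (lam + t)⁻¹ * wt3 t - wt3 t / t, (lam + t)⁻¹ * w2 t;
      -((lam - t)⁻¹ * w3 t) - w3 t / t, -((lam - t)⁻¹ * m t) - 1/2, -((lam - t)⁻¹ * wt1 t);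
      wt2 t / 2, -(w1 t) / 2, 0] := by
    rw [hM, hB1, hB2, hMinf]
    ext i j
    fin_cases i <;> fin_cases j <;>
      simp [Matrix.vecHead, Matrix.vecTail] <;> ring
  rw [eA, eM, HA.deriv, HM.deriv, hAe, hMe, hB1, hB2,
    Matrix.mul_fin_three, Matrix.mul_fin_three]
  have hr : t * t⁻¹ = 1 := mul_inv_cancel₀ ht0
  have hkey : (lam + t)⁻¹ * (lam - t)⁻¹ = t⁻¹ * ((lam - t)⁻¹ - (lam + t)⁻¹) / 2 := by
    field_simp
    ring
  fin_cases i <;> fin_cases j <;>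
    simp only [Fin.mk_zero, Fin.mk_one, Fin.reduceFinMk, Matrix.cons_val', Matrix.cons_val_zero, Matrix.cons_val_one,
      Matrix.head_cons, Matrix.empty_val', Matrix.cons_val_fin_one,
      Matrix.head_fin_const, Matrix.cons_val_two, Matrix.tail_cons, Matrix.of_apply,
      Matrix.vecHead, Matrix.vecTail, Function.comp_apply, Fin.succ_zero_eq_one,
      Fin.succ_one_eq_two]
  · linear_combination ((-2) * w3 t * wt3 t) * hkey
  · linear_combination ((-2) * m t * wt3 t) * hkey + ((lam + t)⁻¹ * w1 t * w2 t + (lam + t)⁻¹ * wt3 t) * hr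
  · linear_combination ((-2) * wt1 t * wt3 t) * hkey
  · linear_combination ((2) * mt t * w3 t) * hkey + ((-1) * (lam - t)⁻¹ * w3 t + (-1) * (lam - t)⁻¹ * wt1 t * wt2 t) * hr
  · linear_combination ((2) * w3 t * wt3 t) * hkey
  · linear_combination ((2) * w2 t * w3 t) * hkey
  · linear_combination ((-1/2 : ℂ) * deriv wt2 t) * hr
  · linear_combination ((-1/2 : ℂ) * deriv w1 t) * hr
  · ring

/-- Zero-curvature (compatibility) condition of the 3×3 linear system for P5 is
equivalent to the system (P5sys). -/
theorem stmt_0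
    (U : Set ℂ) (hU : IsOpen U) (hU0 : (0 : ℂ) ∉ U)
    (m mt w1 w2 w3 wt1 wt2 wt3 : ℂ → ℂ)
    (hm : ∀ t ∈ U, DifferentiableAt ℂ m t)
    (hmt : ∀ t ∈ U, DifferentiableAt ℂ mt t)
    (hw1 : ∀ t ∈ U, DifferentiableAt ℂ w1 t)
    (hw2 : ∀ t ∈ U, DifferentiableAt ℂ w2 t)
    (hw3 : ∀ t ∈ U, DifferentiableAt ℂ w3 t)
    (hwt1 : ∀ t ∈ U, DifferentiableAt ℂ wt1 t)
    (hwt2 : ∀ t ∈ U, DifferentiableAt ℂ wt2 t)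
    (hwt3 : ∀ t ∈ U, DifferentiableAt ℂ wt3 t)
    (B1 B2 B3 Minf : ℂ → Matrix (Fin 3) (Fin 3) ℂ)
    (hB1 : ∀ t, B1 t = !![mt t, wt3 t, w2 t; 0, 0, 0; 0, 0, 0])
    (hB2 : ∀ t, B2 t = !![0, 0, 0; w3 t, m t, wt1 t; 0, 0, 0])
    (hB3 : ∀ t, B3 t = !![0, 0, 0; 0, 0, 0; wt2 t / 2, w1 t / 2, -(1/2)])
    (hMinf : ∀ t, Minf t =
      !![1/2, -(wt3 t) / t, 0; -(w3 t) / t, -(1/2), 0; wt2 t / 2, -(w1 t) / 2, 0])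
    (A M : ℂ → ℂ → Matrix (Fin 3) (Fin 3) ℂ)
    (hA : ∀ lam t, A lam t =
      (lam + t)⁻¹ • B1 t + (lam - t)⁻¹ • B2 t
        + (2 : ℂ)⁻¹ • (1 : Matrix (Fin 3) (Fin 3) ℂ) + B3 t)
    (hM : ∀ lam t, M lam t = (lam + t)⁻¹ • B1 t - (lam - t)⁻¹ • B2 t + Minf t) :
    (∀ t ∈ U, ∀ lam : ℂ, lam ≠ t → lam ≠ -t → ∀ i j : Fin 3,
        deriv (fun s => A lam s i j) t - deriv (fun mu => M mu t i j) lam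
          + ((A lam t * M lam t) i j - (M lam t * A lam t) i j) = 0)
    ↔ (∀ t ∈ U,
        deriv m t = 0 ∧ deriv mt t = 0 ∧
        t * deriv w1 t = wt2 t * wt3 t ∧
        t * deriv wt1 t = -(w2 t * w3 t) ∧
        t * deriv w2 t = -(wt1 t * wt3 t) ∧
        t * deriv wt2 t = w1 t * w3 t ∧
        t * deriv w3 t = -(t - (m t - mt t)) * w3 t - t * (wt1 t * wt2 t) ∧
        t * deriv wt3 t = (t - (m t - mt t)) * wt3 t + t * (w1 t * w2 t)) := by
  constructor
  · intro H t ht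
    have ht0 : t ≠ 0 := fun h => hU0 (h ▸ ht)
    have hne1 : (2 : ℂ) * t ≠ t := by
      intro h; apply ht0; linear_combination h
    have hne2 : (2 : ℂ) * t ≠ -t := by
      intro h; apply ht0; linear_combination (1/3 : ℂ) * h
    have h1 : (2 : ℂ) * t + t ≠ 0 := by
      intro h; apply ht0; linear_combination (1/3 : ℂ) * h
    have h2 : (2 : ℂ) * t - t ≠ 0 := by
      intro h; apply ht0; linear_combination h
    have S : ∀ i j : Fin 3,
        ((2 : ℂ) * t + t)⁻¹ *
          (!![deriv mt t,
              deriv wt3 t - ((t - (m t - mt t)) * wt3 t + t * (w1 t * w2 t)) / t,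
              deriv w2 t + wt1 t * wt3 t / t;
              0, 0, 0; 0, 0, 0] i j)
        + ((2 : ℂ) * t - t)⁻¹ *
          (!![0, 0, 0;
              deriv w3 t + ((t - (m t - mt t)) * w3 t + t * (wt1 t * wt2 t)) / t,
              deriv m t,
              deriv wt1 t + w2 t * w3 t / t;
              0, 0, 0] i j)
        + (!![0, 0, 0; 0, 0, 0;
              (t * deriv wt2 t - w1 t * w3 t) / t / 2,
              (t * deriv w1 t - wt2 t * wt3 t) / t / 2, 0] i j) = 0 := fun i j =>
      (step1 m mt w1 w2 w3 wt1 wt2 wt3 t (2 * t) ht0 h1 h2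
        (hm t ht) (hmt t ht) (hw1 t ht) (hw2 t ht) (hw3 t ht) (hwt1 t ht)
        (hwt2 t ht) (hwt3 t ht) B1 B2 B3 Minf hB1 hB2 hB3 hMinf A M hA hM i j).symm.trans
        (H t ht (2 * t) hne1 hne2 i j)
    have S11 := S 1 1
    have S00 := S 0 0
    have S21 := S 2 1
    have S12 := S 1 2
    have S02 := S 0 2
    have S20 := S 2 0
    have S10 := S 1 0
    have S01 := S 0 1
    simp only [Matrix.cons_val', Matrix.cons_val_zero, Matrix.cons_val_one,
      Matrix.head_cons, Matrix.empty_val', Matrix.cons_val_fin_one,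
      Matrix.head_fin_const, Matrix.cons_val_two, Matrix.tail_cons, Matrix.of_apply,
      Matrix.vecHead, Matrix.vecTail, Function.comp_apply, Fin.succ_zero_eq_one,
      Fin.succ_one_eq_two, mul_zero, add_zero, zero_add]
      at S11 S00 S21 S12 S02 S20 S10 S01
    refine ⟨?_, ?_, ?_, ?_, ?_, ?_, ?_, ?_⟩
    · field_simp at S11; simpa using S11
    · field_simp at S00; simpa using S00
    · field_simp at S21; linear_combination S21
    · field_simp at S12; linear_combination S12
    · field_simp at S02; linear_combination S02
    · field_simp at S20; linear_combination S20
    · field_simp at S10; linear_combination S10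
    · field_simp at S01; linear_combination S01
  · intro H t ht lam hlt hlt' i j
    have ht0 : t ≠ 0 := fun h => hU0 (h ▸ ht)
    have h1 : lam + t ≠ 0 := fun h => hlt' (eq_neg_of_add_eq_zero_left h)
    have h2 : lam - t ≠ 0 := sub_ne_zero.mpr hlt
    obtain ⟨e1, e2, e3, e4, e5, e6, e7, e8⟩ := H t ht
    rw [step1 m mt w1 w2 w3 wt1 wt2 wt3 t lam ht0 h1 h2
      (hm t ht) (hmt t ht) (hw1 t ht) (hw2 t ht) (hw3 t ht) (hwt1 t ht)
      (hwt2 t ht) (hwt3 t ht) B1 B2 B3 Minf hB1 hB2 hB3 hMinf A M hA hM i j]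
    have f1 : deriv wt3 t - ((t - (m t - mt t)) * wt3 t + t * (w1 t * w2 t)) / t = 0 := by
      field_simp
      linear_combination e8
    have f2 : deriv w2 t + wt1 t * wt3 t / t = 0 := by
      field_simp
      linear_combination e5
    have f3 : deriv w3 t + ((t - (m t - mt t)) * w3 t + t * (wt1 t * wt2 t)) / t = 0 := by
      field_simp
      linear_combination e7
    have f4 : deriv wt1 t + w2 t * w3 t / t = 0 := by
      field_simp
      linear_combination e4
    have f5 : (t * deriv wt2 t - w1 t * w3 t) / t / 2 = 0 := by
      field_simp
      linear_combination e6
    have f6 : (t * deriv w1 t - wt2 t * wt3 t) / t / 2 = 0 := by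
      field_simp
      linear_combination e3
    fin_cases i <;> fin_cases j <;>
      simp [Matrix.vecHead, Matrix.vecTail, e1, e2, f1, f2, f3, f4, f5, f6]
end

section
/- Let U ⊆ ℂ be open and connected with 0 ∉ U, let m, m̃ ∈ ℂ be constants, and let w1, w2, w3, w̃1, w̃2, w̃3 : U → ℂ be differentiable functions satisfying the system (P5sys): t·w1′ = w̃2·w̃3, t·w̃1′ = −w2·w3, t·w2′ = −w̃1·w̃3, t·w̃2′ = w1·w3, t·w3′ = −(t − (m − m̃))·w3 − t·w̃1·w̃2, t·w̃3′ = (t − (m − m̃))·w̃3 + t·w1·w2. Set θ∞ = m̃ − m. Then the functions t ↦ w1(t)·w̃1(t) + w2(t)·w̃2(t) and t ↦ w1·w2·w3 + w̃1·w̃2·w̃3 + w3·w̃3 + (θ∞/2)·(w2·w̃2 − w1·w̃1) have derivative zero at every point of U, and hence are constant on U. -/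
open Metric in
/-- A function with zero derivative on an open preconnected set is constant there. -/
lemma const_of_deriv_zero_aux {U : Set ℂ} (hU : IsOpen U) (hUconn : IsPreconnected U)
    {f : ℂ → ℂ} (hd : ∀ t ∈ U, DifferentiableAt ℂ f t)
    (h0 : ∀ t ∈ U, deriv f t = 0) :
    ∀ s ∈ U, ∀ t ∈ U, f s = f t := by
  -- f is locally constant on U
  have hloc : ∀ t ∈ U, ∃ ε > 0, ball t ε ⊆ U ∧ ∀ y ∈ ball t ε, f y = f t := by
    intro t ht
    obtain ⟨ε, hε, hball⟩ := Metric.isOpen_iff.1 hU t ht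
    refine ⟨ε, hε, hball, fun y hy => ?_⟩
    have hdiff : DifferentiableOn ℂ f (ball t ε) := fun z hz => (hd z (hball hz)).differentiableWithinAt
    refine (convex_ball t ε).is_const_of_fderivWithin_eq_zero hdiff (fun z hz => ?_) hy
      (mem_ball_self hε)
    rw [fderivWithin_eq_fderiv (isOpen_ball.uniqueDiffWithinAt hz) (hd z (hball hz))]
    have h1 : HasDerivAt f 0 z := by
      have := (hd z (hball hz)).hasDerivAt
      rwa [h0 z (hball hz)] at this
    have := h1.hasFDerivAt.fderiv
    rw [this]
    ext
    simp
  intro s hs t ht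
  set V : Set ℂ := {x | x ∈ U ∧ f x = f s} with hV
  set W : Set ℂ := {x | x ∈ U ∧ f x ≠ f s} with hW
  have hVopen : IsOpen V := by
    rw [Metric.isOpen_iff]
    rintro x ⟨hxU, hxf⟩
    obtain ⟨ε, hε, hb, hc⟩ := hloc x hxU
    exact ⟨ε, hε, fun y hy => ⟨hb hy, (hc y hy).trans hxf⟩⟩
  have hWopen : IsOpen W := by
    rw [Metric.isOpen_iff]
    rintro x ⟨hxU, hxf⟩
    obtain ⟨ε, hε, hb, hc⟩ := hloc x hxU
    exact ⟨ε, hε, fun y hy => ⟨hb hy, (hc y hy).symm ▸ hxf⟩⟩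
  by_contra hne
  have hVne : (U ∩ V).Nonempty := ⟨s, hs, hs, rfl⟩
  have hWne : (U ∩ W).Nonempty := ⟨t, ht, ht, fun h => hne h.symm⟩
  have hcover : U ⊆ V ∪ W := fun x hx => by
    by_cases h : f x = f s
    · exact Or.inl ⟨hx, h⟩
    · exact Or.inr ⟨hx, h⟩
  obtain ⟨x, _, hxV, hxW⟩ := hUconn V W hVopen hWopen hcover hVne hWne
  exact hxW.2 hxV.2



/-- First integrals of the system (P5sys): the two indicated combinations have
zero derivative on U and are constant on the connected open set U. -/

theorem stmt_1
    (U : Set ℂ) (hU : IsOpen U) (hUconn : IsPreconnected U) (hU0 : (0 : ℂ) ∉ U)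
    (m mt : ℂ)
    (w1 w2 w3 wt1 wt2 wt3 : ℂ → ℂ)
    (hd1 : ∀ t ∈ U, DifferentiableAt ℂ w1 t)
    (hd2 : ∀ t ∈ U, DifferentiableAt ℂ w2 t)
    (hd3 : ∀ t ∈ U, DifferentiableAt ℂ w3 t)
    (hdt1 : ∀ t ∈ U, DifferentiableAt ℂ wt1 t)
    (hdt2 : ∀ t ∈ U, DifferentiableAt ℂ wt2 t)
    (hdt3 : ∀ t ∈ U, DifferentiableAt ℂ wt3 t)
    (he1 : ∀ t ∈ U, t * deriv w1 t = wt2 t * wt3 t)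
    (he2 : ∀ t ∈ U, t * deriv wt1 t = -(w2 t * w3 t))
    (he3 : ∀ t ∈ U, t * deriv w2 t = -(wt1 t * wt3 t))
    (he4 : ∀ t ∈ U, t * deriv wt2 t = w1 t * w3 t)
    (he5 : ∀ t ∈ U, t * deriv w3 t = -(t - (m - mt)) * w3 t - t * (wt1 t * wt2 t))
    (he6 : ∀ t ∈ U, t * deriv wt3 t = (t - (m - mt)) * wt3 t + t * (w1 t * w2 t)) :
    (∀ t ∈ U, deriv (fun s => w1 s * wt1 s + w2 s * wt2 s) t = 0) ∧
    (∀ t ∈ U, deriv (fun s => w1 s * w2 s * w3 s + wt1 s * wt2 s * wt3 s + w3 s * wt3 s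
        + ((mt - m) / 2) * (w2 s * wt2 s - w1 s * wt1 s)) t = 0) ∧
    (∀ s ∈ U, ∀ t ∈ U, w1 s * wt1 s + w2 s * wt2 s = w1 t * wt1 t + w2 t * wt2 t) ∧
    (∀ s ∈ U, ∀ t ∈ U,
      w1 s * w2 s * w3 s + wt1 s * wt2 s * wt3 s + w3 s * wt3 s
        + ((mt - m) / 2) * (w2 s * wt2 s - w1 s * wt1 s)
      = w1 t * w2 t * w3 t + wt1 t * wt2 t * wt3 t + w3 t * wt3 t
        + ((mt - m) / 2) * (w2 t * wt2 t - w1 t * wt1 t)) := by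

  have hF : ∀ t ∈ U, deriv (fun s => w1 s * wt1 s + w2 s * wt2 s) t = 0 := by
    intro t ht
    have ht0 : t ≠ 0 := fun h => hU0 (h ▸ ht)
    have hdF : deriv (fun s => w1 s * wt1 s + w2 s * wt2 s) t
        = deriv w1 t * wt1 t + w1 t * deriv wt1 t
          + (deriv w2 t * wt2 t + w2 t * deriv wt2 t) := by
      rw [deriv_fun_add (f := fun s => w1 s * wt1 s) (g := fun s => w2 s * wt2 s) ((hd1 t ht).mul (hdt1 t ht)) ((hd2 t ht).mul (hdt2 t ht)),
        deriv_fun_mul (hd1 t ht) (hdt1 t ht), deriv_fun_mul (hd2 t ht) (hdt2 t ht)]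
    have key : t * deriv (fun s => w1 s * wt1 s + w2 s * wt2 s) t = 0 := by
      rw [hdF]
      linear_combination wt1 t * he1 t ht + w1 t * he2 t ht + wt2 t * he3 t ht
        + w2 t * he4 t ht
    exact (mul_eq_zero.1 key).resolve_left ht0
  have hG : ∀ t ∈ U, deriv (fun s => w1 s * w2 s * w3 s + wt1 s * wt2 s * wt3 s + w3 s * wt3 s
      + ((mt - m) / 2) * (w2 s * wt2 s - w1 s * wt1 s)) t = 0 := by
    intro t ht
    have ht0 : t ≠ 0 := fun h => hU0 (h ▸ ht)
    have hdG : deriv (fun s => w1 s * w2 s * w3 s + wt1 s * wt2 s * wt3 s + w3 s * wt3 s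
        + ((mt - m) / 2) * (w2 s * wt2 s - w1 s * wt1 s)) t
        = ((deriv w1 t * w2 t + w1 t * deriv w2 t) * w3 t + w1 t * w2 t * deriv w3 t)
          + ((deriv wt1 t * wt2 t + wt1 t * deriv wt2 t) * wt3 t + wt1 t * wt2 t * deriv wt3 t)
          + (deriv w3 t * wt3 t + w3 t * deriv wt3 t)
          + ((mt - m) / 2) * ((deriv w2 t * wt2 t + w2 t * deriv wt2 t)
            - (deriv w1 t * wt1 t + w1 t * deriv wt1 t)) := by
      have d12 : DifferentiableAt ℂ (fun s => w1 s * w2 s) t := (hd1 t ht).mul (hd2 t ht)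
      have d123 : DifferentiableAt ℂ (fun s => w1 s * w2 s * w3 s) t := d12.mul (hd3 t ht)
      have dt12 : DifferentiableAt ℂ (fun s => wt1 s * wt2 s) t := (hdt1 t ht).mul (hdt2 t ht)
      have dt123 : DifferentiableAt ℂ (fun s => wt1 s * wt2 s * wt3 s) t := dt12.mul (hdt3 t ht)
      have d33 : DifferentiableAt ℂ (fun s => w3 s * wt3 s) t := (hd3 t ht).mul (hdt3 t ht)
      have dsub : DifferentiableAt ℂ (fun s => w2 s * wt2 s - w1 s * wt1 s) t :=
        ((hd2 t ht).mul (hdt2 t ht)).sub ((hd1 t ht).mul (hdt1 t ht))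
      rw [deriv_fun_add (f := fun s => w1 s * w2 s * w3 s + wt1 s * wt2 s * wt3 s + w3 s * wt3 s) ((d123.add dt123).add d33) (dsub.const_mul _),
        deriv_fun_add (f := fun s => w1 s * w2 s * w3 s + wt1 s * wt2 s * wt3 s) (d123.add dt123) d33,
        deriv_fun_add (f := fun s => w1 s * w2 s * w3 s) d123 dt123,
        deriv_fun_mul d12 (hd3 t ht), deriv_fun_mul (hd1 t ht) (hd2 t ht),
        deriv_fun_mul dt12 (hdt3 t ht), deriv_fun_mul (hdt1 t ht) (hdt2 t ht),
        deriv_fun_mul (hd3 t ht) (hdt3 t ht), deriv_const_mul _ dsub,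
        deriv_fun_sub (f := fun s => w2 s * wt2 s) (g := fun s => w1 s * wt1 s) ((hd2 t ht).mul (hdt2 t ht)) ((hd1 t ht).mul (hdt1 t ht)),
        deriv_fun_mul (hd2 t ht) (hdt2 t ht), deriv_fun_mul (hd1 t ht) (hdt1 t ht)]
    have key : t * deriv (fun s => w1 s * w2 s * w3 s + wt1 s * wt2 s * wt3 s + w3 s * wt3 s
        + ((mt - m) / 2) * (w2 s * wt2 s - w1 s * wt1 s)) t = 0 := by
      rw [hdG]
      linear_combination (w2 t * w3 t - ((mt - m) / 2) * wt1 t) * he1 t ht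
        + (wt2 t * wt3 t - ((mt - m) / 2) * w1 t) * he2 t ht
        + (w1 t * w3 t + ((mt - m) / 2) * wt2 t) * he3 t ht
        + (wt1 t * wt3 t + ((mt - m) / 2) * w2 t) * he4 t ht
        + (w1 t * w2 t + wt3 t) * he5 t ht
        + (wt1 t * wt2 t + w3 t) * he6 t ht
    exact (mul_eq_zero.1 key).resolve_left ht0
  have hdF' : ∀ t ∈ U, DifferentiableAt ℂ (fun s => w1 s * wt1 s + w2 s * wt2 s) t :=
    fun t ht => ((hd1 t ht).mul (hdt1 t ht)).add ((hd2 t ht).mul (hdt2 t ht))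
  have hdG' : ∀ t ∈ U, DifferentiableAt ℂ (fun s => w1 s * w2 s * w3 s
      + wt1 s * wt2 s * wt3 s + w3 s * wt3 s
      + ((mt - m) / 2) * (w2 s * wt2 s - w1 s * wt1 s)) t := fun t ht =>
    ((((hd1 t ht).mul (hd2 t ht)).mul (hd3 t ht)).add
      (((hdt1 t ht).mul (hdt2 t ht)).mul (hdt3 t ht))).add
        ((hd3 t ht).mul (hdt3 t ht)) |>.add
      ((((hd2 t ht).mul (hdt2 t ht)).sub ((hd1 t ht).mul (hdt1 t ht))).const_mul _)
  exact ⟨hF, hG, const_of_deriv_zero_aux hU hUconn hdF' hF,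
    const_of_deriv_zero_aux hU hUconn hdG' hG⟩
end

section
/- Let U ⊆ ℂ be open with 0 ∉ U, let θ0, θ1, θ∞ ∈ ℂ, and let y, z : U → ℂ be differentiable with y(t) ≠ 0 and y(t) ≠ 1 for all t ∈ U, satisfying the first two equations of system (C.40): t·y′ = t·y − 2z(y−1)² − ((θ0 − θ1 + θ∞)/2)·(y−1)² + (θ0+θ1)·(y−1) and t·z′ = y·z·(z + (θ0−θ1+θ∞)/2) − (1/y)·(z+θ0)·(z + (θ0+θ1+θ∞)/2). Then y is twice differentiable and satisfies the fifth Painlevé equation P5: y″ = (1/(2y) + 1/(y−1))·(y′)² − y′/t + ((y−1)²/t²)·(α·y + β/y) + γ·y/t + δ·y(y+1)/(y−1), with parameters α = (1/2)·((θ0−θ1+θ∞)/2)², β = −(1/2)·((θ0−θ1−θ∞)/2)², γ = 1 − θ0 − θ1, δ = −1/2. -/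
set_option maxHeartbeats 1000000 in
private lemma painleve5_core (t yv zv yp zp th0 th1 thI : ℂ)
    (ht : t ≠ 0) (h0 : yv ≠ 0) (h1 : yv - 1 ≠ 0)
    (E1 : t * yp = t * yv - 2 * zv * (yv - 1) ^ 2 - ((th0 - th1 + thI) / 2) * (yv - 1) ^ 2
        + (th0 + th1) * (yv - 1))
    (E2p : t * zp * yv = yv ^ 2 * zv * (zv + (th0 - th1 + thI) / 2)
        - (zv + th0) * (zv + (th0 + th1 + thI) / 2)) :
    ((1 * yv + t * yp - (2 * zp * (yv - 1) ^ 2 + 2 * zv * (2 * (yv - 1) ^ 1 * yp))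
        - ((th0 - th1 + thI) / 2) * (2 * (yv - 1) ^ 1 * yp) + (th0 + th1) * yp) * t
      - (t * yv - 2 * zv * (yv - 1) ^ 2 - ((th0 - th1 + thI) / 2) * (yv - 1) ^ 2
        + (th0 + th1) * (yv - 1)) * 1) / t ^ 2 =
      (1 / (2 * yv) + 1 / (yv - 1)) * yp ^ 2 - yp / t
        + ((yv - 1) ^ 2 / t ^ 2)
          * ((1 / 2) * ((th0 - th1 + thI) / 2) ^ 2 * yv
            + (-(1 / 2) * ((th0 - th1 - thI) / 2) ^ 2) / yv)
        + (1 - th0 - th1) * yv / t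
        + (-(1 / 2) : ℂ) * yv * (yv + 1) / (yv - 1) := by
  set K : ℂ := 2 * t ^ 2 * yv * (yv - 1) with hK
  have hKne : K ≠ 0 := by
    simp [hK, ht, h0, sub_eq_zero, h1]
  have hT1 : (1 / (2 * yv) + 1 / (yv - 1)) * yp ^ 2
      = (t ^ 2 * yp ^ 2 * (3 * yv - 1)) / K := by
    rw [eq_div_iff hKne, hK]; field_simp; ring
  have hT2 : yp / t = (2 * t * yv * (yv - 1) * yp) / K := by
    rw [div_eq_div_iff ht hKne, hK]; ring
  have hT3 : ((yv - 1) ^ 2 / t ^ 2)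
          * ((1 / 2) * ((th0 - th1 + thI) / 2) ^ 2 * yv
            + (-(1 / 2) * ((th0 - th1 - thI) / 2) ^ 2) / yv)
      = ((yv - 1) ^ 3 * (((th0 - th1 + thI) / 2) ^ 2 * yv ^ 2
          - ((th0 - th1 - thI) / 2) ^ 2)) / K := by
    rw [eq_div_iff hKne, hK]; field_simp; ring
  have hT4 : (1 - th0 - th1) * yv / t
      = (2 * t * yv ^ 2 * (yv - 1) * (1 - th0 - th1)) / K := by
    rw [div_eq_div_iff ht hKne, hK]; ring
  have hT5 : (-(1 / 2) : ℂ) * yv * (yv + 1) / (yv - 1)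
      = (-(t ^ 2 * yv ^ 2 * (yv + 1))) / K := by
    rw [div_eq_div_iff h1 hKne, hK]; ring
  have hL : ((1 * yv + t * yp - (2 * zp * (yv - 1) ^ 2 + 2 * zv * (2 * (yv - 1) ^ 1 * yp))
        - ((th0 - th1 + thI) / 2) * (2 * (yv - 1) ^ 1 * yp) + (th0 + th1) * yp) * t
      - (t * yv - 2 * zv * (yv - 1) ^ 2 - ((th0 - th1 + thI) / 2) * (yv - 1) ^ 2
        + (th0 + th1) * (yv - 1)) * 1) / t ^ 2
      = ((-1 : ℂ) * yv * thI + (-1 : ℂ) * yv * th1 + (-3 : ℂ) * yv * th0 + (-4 : ℂ) * yv * zv + (3 : ℂ) * yv ^ 2 * thI + yv ^ 2 * th1 + (7 : ℂ) * yv ^ 2 * th0 + (12 : ℂ) * yv ^ 2 * zv + (-3 : ℂ) * yv ^ 3 * thI + yv ^ 3 * th1 + (-5 : ℂ) * yv ^ 3 * th0 + (-12 : ℂ) * yv ^ 3 * zv + yv ^ 4 * thI + (-1 : ℂ) * yv ^ 4 * th1 + yv ^ 4 * th0 + (4 : ℂ) * yv ^ 4 * zv + (4 : ℂ) * t * yv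 * zp + (-2 : ℂ) * t * yv * yp * thI + (-4 : ℂ) * t * yv * yp * th0 + (-8 : ℂ) * t * yv * zv * yp + (-12 : ℂ) * t * yv ^ 2 * zp + (4 : ℂ) * t * yv ^ 2 * yp * thI + (-2 : ℂ) * t * yv ^ 2 * yp * th1 + (6 : ℂ) * t * yv ^ 2 * yp * th0 + (16 : ℂ) * t * yv ^ 2 * zv * yp + (12 : ℂ) * t * yv ^ 3 * zp + (-2 : ℂ) * t * yv ^ 3 * yp * thI + (2 : ℂ) * t * yv ^ 3 * yp * th1 + (-2 : ℂ) * t * yv ^ 3 * yp * th0 + (-8 : ℂ) * t * yv ^ 3 * zv * yp + (-4 : ℂ) * t * yv ^ 4 * zp + (-2 : ℂ) * t ^ 2 * yv * yp + (2 : ℂ) * t ^ 2 * yv ^ 2 * yp) / K := by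
    rw [div_eq_div_iff (pow_ne_zero 2 ht) hKne, hK]
    ring
  rw [hL, hT1, hT2, hT3, hT4, hT5, div_sub_div_same, ← add_div,
    ← add_div, ← add_div]
  have key : ((-1 : ℂ) * yv * thI + (-1 : ℂ) * yv * th1 + (-3 : ℂ) * yv * th0 + (-4 : ℂ) * yv * zv + (3 : ℂ) * yv ^ 2 * thI + yv ^ 2 * th1 + (7 : ℂ) * yv ^ 2 * th0 + (12 : ℂ) * yv ^ 2 * zv + (-3 : ℂ) * yv ^ 3 * thI + yv ^ 3 * th1 + (-5 : ℂ) * yv ^ 3 * th0 + (-12 : ℂ) * yv ^ 3 * zv + yv ^ 4 * thI + (-1 : ℂ) * yv ^ 4 * th1 + yv ^ 4 * th0 + (4 : ℂ) * yv ^ 4 * zv + (4 : ℂ) * t * yv * zp + (-2 : ℂ) * t * yv * yp * thI + (-4 : ℂ) * t * yv * yp * th0 + (-8 : ℂ) * t * yv * zv * yp + (-12 : ℂ) * t * yv ^ 2 * zp + (4 : ℂ) * t * yv ^ 2 * yp * thI + (-2 : ℂ) * t * yv ^ 2 * yp * th1 + (6 : ℂ) * t * yv ^ 2 * yp * th0 +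 (16 : ℂ) * t * yv ^ 2 * zv * yp + (12 : ℂ) * t * yv ^ 3 * zp + (-2 : ℂ) * t * yv ^ 3 * yp * thI + (2 : ℂ) * t * yv ^ 3 * yp * th1 + (-2 : ℂ) * t * yv ^ 3 * yp * th0 + (-8 : ℂ) * t * yv ^ 3 * zv * yp + (-4 : ℂ) * t * yv ^ 4 * zp + (-2 : ℂ) * t ^ 2 * yv * yp + (2 : ℂ) * t ^ 2 * yv ^ 2 * yp) = t ^ 2 * yp ^ 2 * (3 * yv - 1) - 2 * t * yv * (yv - 1) * yp
      + (yv - 1) ^ 3 * (((th0 - th1 + thI) / 2) ^ 2 * yv ^ 2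
          - ((th0 - th1 - thI) / 2) ^ 2)
      + 2 * t * yv ^ 2 * (yv - 1) * (1 - th0 - th1)
      + -(t ^ 2 * yv ^ 2 * (yv + 1)) := by
    linear_combination ((-1/2 : ℂ) * thI + (-1/2 : ℂ) * th1 + (-3/2 : ℂ) * th0 + (-2 : ℂ) * zv + (-2 : ℂ) * yv + (1/2 : ℂ) * yv * thI + (3/2 : ℂ) * yv * th1 + (5/2 : ℂ) * yv * th0 + (2 : ℂ) * yv * zv + (2 : ℂ) * yv ^ 2 + (1/2 : ℂ) * yv ^ 2 * thI + (-3/2 : ℂ) * yv ^ 2 * th1 + (-1/2 : ℂ) * yv ^ 2 * th0 + (2 : ℂ) * yv ^ 2 * zv + (-1/2 : ℂ) * yv ^ 3 * thI + (1/2 : ℂ) * yv ^ 3 * th1 + (-1/2 : ℂ) * yv ^ 3 * th0 + (-2 : ℂ) * yv ^ 3 * zv + t * yp + (-1 : ℂ) * t * yv + (-3 : ℂ) * t * yv * yp + (-1 : ℂ) * t * yv ^ 2) * E1 + ((4 : ℂ) + (-12 : ℂ) * yv + (12 : ℂ) * yv ^ 2 + (-4 : ℂ) * yv ^ 3) * 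E2p
  rw [key]

/-- A solution (y, z) of the first two equations of system (C.40) yields a solution
y of the fifth Painlevé equation with the indicated parameters. -/
theorem stmt_3
    (U : Set ℂ) (hU : IsOpen U) (hU0 : (0 : ℂ) ∉ U)
    (th0 th1 thI : ℂ)
    (y z : ℂ → ℂ)
    (hyd : ∀ t ∈ U, DifferentiableAt ℂ y t)
    (hzd : ∀ t ∈ U, DifferentiableAt ℂ z t)
    (hy0 : ∀ t ∈ U, y t ≠ 0)
    (hy1 : ∀ t ∈ U, y t ≠ 1)
    (heq1 : ∀ t ∈ U, t * deriv y t = t * y t - 2 * z t * (y t - 1) ^ 2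
        - ((th0 - th1 + thI) / 2) * (y t - 1) ^ 2 + (th0 + th1) * (y t - 1))
    (heq2 : ∀ t ∈ U, t * deriv z t = y t * z t * (z t + (th0 - th1 + thI) / 2)
        - (1 / y t) * (z t + th0) * (z t + (th0 + th1 + thI) / 2)) :
    ∀ t ∈ U,
      DifferentiableAt ℂ (deriv y) t ∧
      deriv (deriv y) t =
        (1 / (2 * y t) + 1 / (y t - 1)) * (deriv y t) ^ 2 - deriv y t / t
        + ((y t - 1) ^ 2 / t ^ 2)
          * ((1 / 2) * ((th0 - th1 + thI) / 2) ^ 2 * y t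
            + (-(1 / 2) * ((th0 - th1 - thI) / 2) ^ 2) / y t)
        + (1 - th0 - th1) * y t / t
        + (-(1 / 2) : ℂ) * y t * (y t + 1) / (y t - 1) := by
  intro t ht
  have htne : t ≠ 0 := fun h => hU0 (h ▸ ht)
  set g : ℂ → ℂ := fun s =>
    (s * y s - 2 * z s * (y s - 1) ^ 2 - ((th0 - th1 + thI) / 2) * (y s - 1) ^ 2
      + (th0 + th1) * (y s - 1)) / s with hgdef
  have hg : ∀ s ∈ U, deriv y s = g s := by
    intro s hs
    have hsne : s ≠ 0 := fun h => hU0 (h ▸ hs)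
    have h := heq1 s hs
    rw [hgdef]
    rw [eq_div_iff hsne, mul_comm]
    exact h
  have hev : deriv y =ᶠ[nhds t] g :=
    Filter.eventuallyEq_of_mem (hU.mem_nhds ht) hg
  have hy' : HasDerivAt y (deriv y t) t := (hyd t ht).hasDerivAt
  have hz' : HasDerivAt z (deriv z t) t := (hzd t ht).hasDerivAt
  have h1 : HasDerivAt (fun s => s * y s) (1 * y t + t * deriv y t) t :=
    (hasDerivAt_id t).mul hy'
  have hym : HasDerivAt (fun s => (y s - 1) ^ 2)
      (2 * (y t - 1) ^ 1 * deriv y t) t := by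
    simpa using (hy'.sub_const 1).fun_pow 2
  have h2 : HasDerivAt (fun s => 2 * z s * (y s - 1) ^ 2)
      (2 * deriv z t * (y t - 1) ^ 2 + 2 * z t * (2 * (y t - 1) ^ 1 * deriv y t)) t := by
    simpa [mul_assoc] using (hz'.const_mul 2).fun_mul hym
  have h3 : HasDerivAt (fun s => ((th0 - th1 + thI) / 2) * (y s - 1) ^ 2)
      (((th0 - th1 + thI) / 2) * (2 * (y t - 1) ^ 1 * deriv y t)) t :=
    hym.const_mul _
  have h4 : HasDerivAt (fun s => (th0 + th1) * (y s - 1)) ((th0 + th1) * deriv y t) t := by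
    simpa using (hy'.sub_const 1).const_mul (th0 + th1)
  have hN : HasDerivAt (fun s => s * y s - 2 * z s * (y s - 1) ^ 2
      - ((th0 - th1 + thI) / 2) * (y s - 1) ^ 2 + (th0 + th1) * (y s - 1))
      (1 * y t + t * deriv y t - (2 * deriv z t * (y t - 1) ^ 2
        + 2 * z t * (2 * (y t - 1) ^ 1 * deriv y t))
        - ((th0 - th1 + thI) / 2) * (2 * (y t - 1) ^ 1 * deriv y t)
        + (th0 + th1) * deriv y t) t :=
    ((h1.sub h2).sub h3).add h4
  have hgD : HasDerivAt g
      (((1 * y t + t * deriv y t - (2 * deriv z t * (y t - 1) ^ 2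
        + 2 * z t * (2 * (y t - 1) ^ 1 * deriv y t))
        - ((th0 - th1 + thI) / 2) * (2 * (y t - 1) ^ 1 * deriv y t)
        + (th0 + th1) * deriv y t) * t
      - (t * y t - 2 * z t * (y t - 1) ^ 2 - ((th0 - th1 + thI) / 2) * (y t - 1) ^ 2
        + (th0 + th1) * (y t - 1)) * 1) / t ^ 2) t := by
    simpa using hN.fun_div (hasDerivAt_id t) htne
  refine ⟨hgD.differentiableAt.congr_of_eventuallyEq hev, ?_⟩
  have hderiv2 : deriv (deriv y) t = deriv g t := hev.deriv_eq
  rw [hderiv2, hgD.deriv]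
  have h0 := hy0 t ht
  have h1' : y t - 1 ≠ 0 := sub_ne_zero.mpr (hy1 t ht)
  have e2p : t * deriv z t * y t = (y t) ^ 2 * z t * (z t + (th0 - th1 + thI) / 2)
      - (z t + th0) * (z t + (th0 + th1 + thI) / 2) := by
    rw [heq2 t ht]
    field_simp
  exact painleve5_core t (y t) (z t) (deriv y t) (deriv z t) th0 th1 thI
    htne h0 h1' (heq1 t ht) e2p
end

section
/- Let U ⊆ ℂ be open and connected with 0 ∉ U, let m, m̃, θ0, θ1 ∈ ℂ be constants with θ∞ := m̃ − m, and let w1, w2, w3, w̃1, w̃2, w̃3 : U → ℂ be differentiable functions satisfying system (P5sys): t·w1′ = w̃2·w̃3, t·w̃1′ = −w2·w3, t·w2′ = −w̃1·w̃3, t·w̃2′ = w1·w3, t·w3′ = −(t − (m − m̃))·w3 − t·w̃1·w̃2, t·w̃3′ = (t − (m − m̃))·w̃3 + t·w1·w2, together with w1·w̃1 + w2·w̃2 = θ0 identically on U. Define z := w2·w̃2 − θ0 and σ(t) := w3(t)·w̃3(t) + t·w1(t)·w̃1(t) + ((θ0 + θ∞)² − θ1²)/4. Then σ′(t) = −z(t)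 for all t ∈ U. -/
/-- The derivative of the sigma-function equals minus z for solutions of (P5sys). -/
theorem stmt_4
    (U : Set ℂ) (hU : IsOpen U) (hUconn : IsPreconnected U) (hU0 : (0 : ℂ) ∉ U)
    (m mt th0 th1 thI : ℂ) (hthI : thI = mt - m)
    (w1 w2 w3 wt1 wt2 wt3 : ℂ → ℂ)
    (hd1 : ∀ t ∈ U, DifferentiableAt ℂ w1 t)
    (hd2 : ∀ t ∈ U, DifferentiableAt ℂ w2 t)
    (hd3 : ∀ t ∈ U, DifferentiableAt ℂ w3 t)
    (hdt1 : ∀ t ∈ U, DifferentiableAt ℂ wt1 t)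
    (hdt2 : ∀ t ∈ U, DifferentiableAt ℂ wt2 t)
    (hdt3 : ∀ t ∈ U, DifferentiableAt ℂ wt3 t)
    (he1 : ∀ t ∈ U, t * deriv w1 t = wt2 t * wt3 t)
    (he2 : ∀ t ∈ U, t * deriv wt1 t = -(w2 t * w3 t))
    (he3 : ∀ t ∈ U, t * deriv w2 t = -(wt1 t * wt3 t))
    (he4 : ∀ t ∈ U, t * deriv wt2 t = w1 t * w3 t)
    (he5 : ∀ t ∈ U, t * deriv w3 t = -(t - (m - mt)) * w3 t - t * (wt1 t * wt2 t))
    (he6 : ∀ t ∈ U, t * deriv wt3 t = (t - (m - mt)) * wt3 t + t * (w1 t * w2 t))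
    (hint1 : ∀ t ∈ U, w1 t * wt1 t + w2 t * wt2 t = th0)
    (z sig : ℂ → ℂ)
    (hz : z = fun t => w2 t * wt2 t - th0)
    (hsig : sig = fun t => w3 t * wt3 t + t * (w1 t * wt1 t)
      + ((th0 + thI) ^ 2 - th1 ^ 2) / 4) :
    ∀ t ∈ U, HasDerivAt sig (-(z t)) t := by
  intro t ht
  have htne : t ≠ 0 := fun h => hU0 (h ▸ ht)
  have h1 := (hd1 t ht).hasDerivAt
  have h3 := (hd3 t ht).hasDerivAt
  have ht1 := (hdt1 t ht).hasDerivAt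
  have ht3 := (hdt3 t ht).hasDerivAt
  have hD : HasDerivAt sig
      (deriv w3 t * wt3 t + w3 t * deriv wt3 t +
        (1 * (w1 t * wt1 t) + t * (deriv w1 t * wt1 t + w1 t * deriv wt1 t))) t := by
    rw [hsig]
    exact ((h3.mul ht3).add ((hasDerivAt_id t).mul (h1.mul ht1))).add_const _
  have key : deriv w3 t * wt3 t + w3 t * deriv wt3 t +
      (1 * (w1 t * wt1 t) + t * (deriv w1 t * wt1 t + w1 t * deriv wt1 t)) = -(z t) := by
    have h5 := he5 t ht
    have h6 := he6 t ht
    have e1 := he1 t ht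
    have e2 := he2 t ht
    have hi := hint1 t ht
    rw [hz]
    apply mul_left_cancel₀ htne
    ring_nf
    linear_combination wt3 t * h5 + w3 t * h6 + t * wt1 t * e1 + t * w1 t * e2 + t * hi
  exact key ▸ hD
end

section
/- Let U ⊆ ℂ be open and connected with 0 ∉ U, let m, m̃ ∈ ℂ be constants, and let w1, w2, w3, w̃1, w̃2, w̃3 : U → ℂ be differentiable functions satisfying system (P5sys): t·w1′ = w̃2·w̃3, t·w̃1′ = −w2·w3, t·w2′ = −w̃1·w̃3, t·w̃2′ = w1·w3, t·w3′ = −(t − (m − m̃))·w3 − t·w̃1·w̃2, t·w̃3′ = (t − (m − m̃))·w̃3 + t·w1·w2. Then (i) the function D := w1·w2·w3 + w̃1·w̃2·w̃3 + w3·w̃3 − m̃·w1·w̃1 − m·w2·w̃2 − m·m̃ has derivative zero at every point of U, hence is constant on U; and (ii) if moreover θ0, θ1, θ∞ ∈ ℂ satisfy θ∞ = m̃ − m, m = −(θ0+θ1+θ∞)/2, and the identities w1·w̃1 + w2·w̃2 = θ0 and w1·w2·w3 + w̃1·w̃2·w̃3 + w3·w̃3 + (θ∞/2)·(w2·w̃2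 − w1·w̃1) = (θ1² − θ0² − θ∞²)/4 hold on U, then D = 0 identically on U. -/
/-- (i) det B is a first integral of (P5sys); (ii) with the special choice of m it
vanishes identically. -/
theorem stmt_6
    (U : Set ℂ) (hU : IsOpen U) (hUconn : IsPreconnected U) (hU0 : (0 : ℂ) ∉ U)
    (m mt : ℂ)
    (w1 w2 w3 wt1 wt2 wt3 : ℂ → ℂ)
    (hd1 : ∀ t ∈ U, DifferentiableAt ℂ w1 t)
    (hd2 : ∀ t ∈ U, DifferentiableAt ℂ w2 t)
    (hd3 : ∀ t ∈ U, DifferentiableAt ℂ w3 t)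
    (hdt1 : ∀ t ∈ U, DifferentiableAt ℂ wt1 t)
    (hdt2 : ∀ t ∈ U, DifferentiableAt ℂ wt2 t)
    (hdt3 : ∀ t ∈ U, DifferentiableAt ℂ wt3 t)
    (he1 : ∀ t ∈ U, t * deriv w1 t = wt2 t * wt3 t)
    (he2 : ∀ t ∈ U, t * deriv wt1 t = -(w2 t * w3 t))
    (he3 : ∀ t ∈ U, t * deriv w2 t = -(wt1 t * wt3 t))
    (he4 : ∀ t ∈ U, t * deriv wt2 t = w1 t * w3 t)
    (he5 : ∀ t ∈ U, t * deriv w3 t = -(t - (m - mt)) * w3 t - t * (wt1 t * wt2 t))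
    (he6 : ∀ t ∈ U, t * deriv wt3 t = (t - (m - mt)) * wt3 t + t * (w1 t * w2 t))
    (D : ℂ → ℂ)
    (hD : D = fun t => w1 t * w2 t * w3 t + wt1 t * wt2 t * wt3 t + w3 t * wt3 t
      - mt * (w1 t * wt1 t) - m * (w2 t * wt2 t) - m * mt) :
    (∀ t ∈ U, deriv D t = 0) ∧
    (∀ s ∈ U, ∀ t ∈ U, D s = D t) ∧
    (∀ th0 th1 thI : ℂ,
      thI = mt - m →
      m = -((th0 + th1 + thI) / 2) →
      (∀ t ∈ U, w1 t * wt1 t + w2 t * wt2 t = th0) →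
      (∀ t ∈ U, w1 t * w2 t * w3 t + wt1 t * wt2 t * wt3 t + w3 t * wt3 t
          + (thI / 2) * (w2 t * wt2 t - w1 t * wt1 t)
        = (th1 ^ 2 - th0 ^ 2 - thI ^ 2) / 4) →
      ∀ t ∈ U, D t = 0) := by
  have hdD : ∀ t ∈ U, DifferentiableAt ℂ D t := by
    intro t ht
    rw [hD]
    exact ((((((hd1 t ht).mul (hd2 t ht)).mul (hd3 t ht)).add
      (((hdt1 t ht).mul (hdt2 t ht)).mul (hdt3 t ht))).add
      ((hd3 t ht).mul (hdt3 t ht))).sub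
      (((hd1 t ht).mul (hdt1 t ht)).const_mul mt)).sub
      (((hd2 t ht).mul (hdt2 t ht)).const_mul m) |>.sub_const (m * mt)
  have hderiv : ∀ t ∈ U, deriv D t = 0 := by
    intro t ht
    have htne : t ≠ 0 := fun h => hU0 (h ▸ ht)
    have a1 := (hd1 t ht).hasDerivAt
    have a2 := (hd2 t ht).hasDerivAt
    have a3 := (hd3 t ht).hasDerivAt
    have a4 := (hdt1 t ht).hasDerivAt
    have a5 := (hdt2 t ht).hasDerivAt
    have a6 := (hdt3 t ht).hasDerivAt
    have H : HasDerivAt D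
        ((((((deriv w1 t * w2 t + w1 t * deriv w2 t) * w3 t
            + w1 t * w2 t * deriv w3 t)
          + ((deriv wt1 t * wt2 t + wt1 t * deriv wt2 t) * wt3 t
            + wt1 t * wt2 t * deriv wt3 t))
          + (deriv w3 t * wt3 t + w3 t * deriv wt3 t))
          - mt * (deriv w1 t * wt1 t + w1 t * deriv wt1 t))
          - m * (deriv w2 t * wt2 t + w2 t * deriv wt2 t)) t := by
      rw [hD]
      exact ((((((a1.mul a2).mul a3).add ((a4.mul a5).mul a6)).add
        (a3.mul a6)).sub ((a1.mul a4).const_mul mt)).sub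
        ((a2.mul a5).const_mul m)).sub_const (m * mt)
    rw [H.deriv]
    refine mul_left_cancel₀ htne ?_
    rw [mul_zero]
    linear_combination (w2 t * w3 t - mt * wt1 t) * he1 t ht
      + (wt2 t * wt3 t - mt * w1 t) * he2 t ht
      + (w1 t * w3 t - m * wt2 t) * he3 t ht
      + (wt1 t * wt3 t - m * w2 t) * he4 t ht
      + (w1 t * w2 t + wt3 t) * he5 t ht
      + (wt1 t * wt2 t + w3 t) * he6 t ht
  refine ⟨hderiv, ?_, ?_⟩
  · intro s hs t ht
    have hDan : AnalyticOnNhd ℂ D U :=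
      (DifferentiableOn.analyticOnNhd (fun x hx => (hdD x hx).differentiableWithinAt) hU)
    obtain ⟨ε, hε, hball⟩ := Metric.isOpen_iff.1 hU s hs
    have hconst : ∀ y ∈ Metric.ball s ε, D y = D s := by
      intro y hy
      refine (convex_ball s ε).is_const_of_fderivWithin_eq_zero
        (fun x hx => (hdD x (hball hx)).differentiableWithinAt) ?_ hy (Metric.mem_ball_self hε)
      intro x hx
      rw [fderivWithin_of_isOpen Metric.isOpen_ball hx]
      have hx' := hball hx
      have : HasDerivAt D 0 x := by
        have := (hdD x hx').hasDerivAt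
        rwa [hderiv x hx'] at this
      rw [this.hasFDerivAt.fderiv]
      ext
      simp
    have hev : D =ᶠ[nhds s] (fun _ => D s) :=
      Filter.eventuallyEq_of_mem (Metric.ball_mem_nhds s hε) hconst
    have := hDan.eqOn_of_preconnected_of_eventuallyEq analyticOnNhd_const hUconn hs hev
    exact (this ht).symm
  · intro th0 th1 thI hI hm h3 h4 t ht
    subst hI hD
    have hth1 : th1 = -th0 - mt - m := by linear_combination (2 : ℂ) * hm
    subst hth1
    linear_combination h4 t ht - ((m + mt) / 2) * h3 t ht
end

section
/- (The reflection R_0 as a Bäcklund transformation for P5.) Let U ⊆ ℂ be open with 0 ∉ U, let θ0, θ1, θ∞ ∈ ℂ, and let y, z, u : U → ℂ be differentiable with y, u, z, and z + θ0 nonvanishing on U, satisfying system (C.40): t·y′ = t·y − 2z(y−1)² − ((θ0 − θ1 + θ∞)/2)·(y−1)² + (θ0+θ1)·(y−1); t·z′ = y·z·(z + (θ0−θ1+θ∞)/2) − (1/y)·(z+θ0)·(z + (θ0+θ1+θ∞)/2); t·u′/u = −2z − θ0 + y·(z + (θ0−θ1+θ∞)/2) + (1/y)·(z + (θ0+θ1+θ∞)/2).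 Then the functions ŷ := y·z/(z + θ0), ẑ := z + θ0, û := u·(z + θ0)/z satisfy system (C.40) with (θ0, θ1, θ∞) replaced by (−θ0, θ1, θ∞). -/
set_option maxHeartbeats 4000000 in
/-- The reflection R₀ as a Bäcklund transformation for P5: the transformed triple
satisfies system (C.40) with θ0 replaced by −θ0. -/
theorem stmt_9
    (U : Set ℂ) (hU : IsOpen U) (hU0 : (0 : ℂ) ∉ U)
    (th0 th1 thI : ℂ)
    (y z u : ℂ → ℂ)
    (hyd : ∀ t ∈ U, DifferentiableAt ℂ y t)
    (hzd : ∀ t ∈ U, DifferentiableAt ℂ z t)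
    (hud : ∀ t ∈ U, DifferentiableAt ℂ u t)
    (hyne : ∀ t ∈ U, y t ≠ 0)
    (hune : ∀ t ∈ U, u t ≠ 0)
    (hzne : ∀ t ∈ U, z t ≠ 0)
    (hzth0 : ∀ t ∈ U, z t + th0 ≠ 0)
    (heq1 : ∀ t ∈ U, t * deriv y t = t * y t - 2 * z t * (y t - 1) ^ 2
        - ((th0 - th1 + thI) / 2) * (y t - 1) ^ 2 + (th0 + th1) * (y t - 1))
    (heq2 : ∀ t ∈ U, t * deriv z t = y t * z t * (z t + (th0 - th1 + thI) / 2)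
        - (1 / y t) * (z t + th0) * (z t + (th0 + th1 + thI) / 2))
    (heq3 : ∀ t ∈ U, t * deriv u t / u t = -(2 * z t) - th0
        + y t * (z t + (th0 - th1 + thI) / 2)
        + (1 / y t) * (z t + (th0 + th1 + thI) / 2))
    (Y Z W : ℂ → ℂ)
    (hY : Y = fun t => y t * z t / (z t + th0))
    (hZ : Z = fun t => z t + th0)
    (hW : W = fun t => u t * (z t + th0) / z t) :
    ∀ t ∈ U,
      DifferentiableAt ℂ Y t ∧ DifferentiableAt ℂ Z t ∧ DifferentiableAt ℂ W t ∧
      t * deriv Y t = t * Y t - 2 * Z t * (Y t - 1) ^ 2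
        - ((-th0 - th1 + thI) / 2) * (Y t - 1) ^ 2 + (-th0 + th1) * (Y t - 1) ∧
      t * deriv Z t = Y t * Z t * (Z t + (-th0 - th1 + thI) / 2)
        - (1 / Y t) * (Z t + -th0) * (Z t + (-th0 + th1 + thI) / 2) ∧
      t * deriv W t / W t = -(2 * Z t) - (-th0)
        + Y t * (Z t + (-th0 - th1 + thI) / 2)
        + (1 / Y t) * (Z t + (-th0 + th1 + thI) / 2) := by
  intro t ht
  have ht0 : t ≠ 0 := fun h => hU0 (h ▸ ht)
  have hy := hyd t ht
  have hz := hzd t ht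
  have hu := hud t ht
  have hyn := hyne t ht
  have hun := hune t ht
  have hzn := hzne t ht
  have hztn := hzth0 t ht
  have e1 := heq1 t ht
  have e2 := heq2 t ht
  have e3 := heq3 t ht
  have hZd : DifferentiableAt ℂ (fun s => z s + th0) t := hz.add_const _
  have hYd : DifferentiableAt ℂ Y t := by
    rw [hY]; exact (hy.mul hz).div hZd hztn
  have hWd : DifferentiableAt ℂ W t := by
    rw [hW]; exact (hu.mul hZd).div hz hzn
  have dZ : deriv (fun s => z s + th0) t = deriv z t := by
    simp [deriv_add_const]
  have dY : deriv Y t = ((deriv y t * z t + y t * deriv z t) * (z t + th0)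
      - y t * z t * deriv z t) / (z t + th0) ^ 2 := by
    rw [hY, deriv_fun_div (hy.fun_mul hz) hZd hztn, deriv_fun_mul hy hz, dZ]
  have dW : deriv W t = ((deriv u t * (z t + th0) + u t * deriv z t) * z t
      - u t * (z t + th0) * deriv z t) / (z t) ^ 2 := by
    rw [hW, deriv_fun_div (hu.fun_mul hZd) hz hzn, deriv_fun_mul hu hZd, dZ]
  -- polynomial forms of the hypotheses
  have e2' : 2 * t * deriv z t * y t = 2 * y t ^ 2 * z t * (z t + (th0 - th1 + thI) / 2)
      - 2 * (z t + th0) * (z t + (th0 + th1 + thI) / 2) := by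
    field_simp at e2
    linear_combination e2
  have e3' : 2 * t * deriv u t * y t = u t * ((-(2 * z t) - th0) * 2 * y t
      + 2 * y t ^ 2 * (z t + (th0 - th1 + thI) / 2)
      + 2 * (z t + (th0 + th1 + thI) / 2)) := by
    rw [div_eq_iff hun] at e3
    field_simp at e3
    linear_combination e3
  have hDy : deriv y t = (t * y t - 2 * z t * (y t - 1) ^ 2
      - ((th0 - th1 + thI) / 2) * (y t - 1) ^ 2 + (th0 + th1) * (y t - 1)) / t := by
    rw [eq_div_iff ht0]; linear_combination e1
  have hDz : deriv z t = (2 * y t ^ 2 * z t * (z t + (th0 - th1 + thI) / 2)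
      - 2 * (z t + th0) * (z t + (th0 + th1 + thI) / 2)) / (2 * t * y t) := by
    rw [eq_div_iff (by simp [ht0, hyn])]; linear_combination e2'
  have hDu : deriv u t = (u t * ((-(2 * z t) - th0) * 2 * y t
      + 2 * y t ^ 2 * (z t + (th0 - th1 + thI) / 2)
      + 2 * (z t + (th0 + th1 + thI) / 2))) / (2 * t * y t) := by
    rw [eq_div_iff (by simp [ht0, hyn])]; linear_combination e3'
  have hYn : Y t ≠ 0 := by
    rw [hY]; exact div_ne_zero (mul_ne_zero hyn hzn) hztn
  have hWn : W t ≠ 0 := by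
    rw [hW]; exact div_ne_zero (mul_ne_zero hun hztn) hzn
  refine ⟨hYd, by rw [hZ]; exact hZd, hWd, ?_, ?_, ?_⟩
  · have hR : t * Y t - 2 * Z t * (Y t - 1) ^ 2
        - ((-th0 - th1 + thI) / 2) * (Y t - 1) ^ 2 + (-th0 + th1) * (Y t - 1)
        = (t * y t * z t * (z t + th0)
            - 2 * (z t + th0) * (y t * z t - (z t + th0)) ^ 2
            - ((-th0 - th1 + thI) / 2) * (y t * z t - (z t + th0)) ^ 2
            + (-th0 + th1) * (y t * z t - (z t + th0)) * (z t + th0)) / (z t + th0) ^ 2 := by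
      simp only [hY, hZ]
      obtain ⟨w, hw, hwn⟩ : ∃ w, w = z t + th0 ∧ w ≠ 0 := ⟨_, rfl, hztn⟩
      rw [← hw]
      field_simp [hwn]
    rw [dY, hR, ← mul_div_assoc,
      div_eq_div_iff (pow_ne_zero 2 hztn) (pow_ne_zero 2 hztn)]
    linear_combination (z t * (z t + th0) * (z t + th0) ^ 2) * e1
      + (th0 * (z t + th0) ^ 2 / 2) * e2'
  · have hdZ : deriv Z t = deriv z t := by rw [hZ]; exact dZ
    rw [hdZ, hDz, hY, hZ]
    field_simp
    ring
  · have hL : t * deriv W t / W t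
        = t * ((deriv u t * (z t + th0) + u t * deriv z t) * z t
            - u t * (z t + th0) * deriv z t) / (z t * u t * (z t + th0)) := by
      rw [dW, hW]
      field_simp
    have hR : -(2 * Z t) - (-th0) + Y t * (Z t + (-th0 - th1 + thI) / 2)
        + (1 / Y t) * (Z t + (-th0 + th1 + thI) / 2)
        = ((-(2 * (z t + th0)) + th0) * (y t * z t * (z t + th0))
            + y t ^ 2 * z t ^ 2 * ((z t + th0) + (-th0 - th1 + thI) / 2)
            + (z t + th0) ^ 2 * ((z t + th0) + (-th0 + th1 + thI) / 2))
          / (y t * z t * (z t + th0)) := by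
      rw [hY, hZ]
      field_simp
      ring
    rw [hL, hR, div_eq_div_iff (by simp [hzn, hun, hztn])
      (by simp [hyn, hzn, hztn])]
    linear_combination (z t ^ 2 * (z t + th0) ^ 2 / 2) * e3'
      - (u t * th0 * z t * (z t + th0) / 2) * e2'
end

section
/- (The 'true' Jimbo–Miwa parametrization yields P5.) Let U ⊆ ℂ be open with 0 ∉ U, let θ0, θ1, θ∞ ∈ ℂ, and let y, z : U → ℂ be differentiable with y(t) ≠ 0 and y(t) ≠ 1 for all t ∈ U, satisfying the system: t·y′ = t·y − 2z·(y−1)² − θ∞·(y−1) and t·z′ = y·(z² − θ1²/4) − (1/y)·((z − θ∞/2)² − θ0²/4). Then y is twice differentiable and satisfies the fifth Painlevé equation P5 with parameters α = θ1²/2, β = −θ0²/2, γ = 1 + θ∞, δ = −1/2. -/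
set_option maxHeartbeats 1000000 in
private lemma keylem (T Y Z W V th0 th1 thI : ℂ) (hT : T ≠ 0) (hY : Y ≠ 0) (hY1 : Y - 1 ≠ 0)
    (h1 : T * W = T * Y - 2 * Z * (Y - 1) ^ 2 - thI * (Y - 1))
    (h2 : T * V * Y = Y ^ 2 * (Z ^ 2 - th1 ^ 2 / 4) - ((Z - thI / 2) ^ 2 - th0 ^ 2 / 4)) :
    W - ((2 * V * (Y - 1) ^ 2 + 2 * Z * ((2 : ℕ) * (Y - 1) ^ (2 - 1) * W) + thI * W) * T
        - (2 * Z * (Y - 1) ^ 2 + thI * (Y - 1)) * 1) / T ^ 2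
      = (1 / (2 * Y) + 1 / (Y - 1)) * W ^ 2 - W / T
        + ((Y - 1) ^ 2 / T ^ 2) * ((th1 ^ 2 / 2) * Y + (-(th0 ^ 2 / 2)) / Y)
        + (1 + thI) * Y / T
        + (-(1 / 2) : ℂ) * Y * (Y + 1) / (Y - 1) := by
  have hD : (2 * Y * (Y - 1) * T * (T ^ 2 * (2 * (2 * Y)))) ≠ 0 := by
    apply mul_ne_zero (mul_ne_zero (mul_ne_zero (mul_ne_zero two_ne_zero hY) hY1) hT)
    exact mul_ne_zero (pow_ne_zero 2 hT) (mul_ne_zero two_ne_zero (mul_ne_zero two_ne_zero hY))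
  have hq : (2 * Y * (Y - 1) * T * (T ^ 2 * (2 * (2 * Y)))) * (2 * Y * (Y - 1) * T * (T ^ 2 * (2 * (2 * Y))))⁻¹ = 1 :=
    mul_inv_cancel₀ hD
  have h8Y : (8 : ℂ) * Y ≠ 0 := mul_ne_zero (by norm_num) hY
  rw [← sub_eq_zero]
  have hW : W = (T * Y - 2 * Z * (Y - 1) ^ 2 - thI * (Y - 1)) / T := by
    rw [eq_div_iff hT]; linear_combination h1
  have hV : V = (Y ^ 2 * (Z ^ 2 - th1 ^ 2 / 4) - ((Z - thI / 2) ^ 2 - th0 ^ 2 / 4)) / (T * Y) := by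
    rw [eq_div_iff (mul_ne_zero hT hY)]; linear_combination h2
  subst hW hV
  field_simp
  ring

/-- The "true" Jimbo–Miwa parametrization: the system (aeq:y-true)-(aeq:z-true)
implies that y solves P5 with α = θ1²/2, β = −θ0²/2, γ = 1 + θ∞, δ = −1/2. -/
theorem stmt_10
    (U : Set ℂ) (hU : IsOpen U) (hU0 : (0 : ℂ) ∉ U)
    (th0 th1 thI : ℂ)
    (y z : ℂ → ℂ)
    (hyd : ∀ t ∈ U, DifferentiableAt ℂ y t)
    (hzd : ∀ t ∈ U, DifferentiableAt ℂ z t)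
    (hy0 : ∀ t ∈ U, y t ≠ 0)
    (hy1 : ∀ t ∈ U, y t ≠ 1)
    (heq1 : ∀ t ∈ U, t * deriv y t = t * y t - 2 * z t * (y t - 1) ^ 2 - thI * (y t - 1))
    (heq2 : ∀ t ∈ U, t * deriv z t = y t * ((z t) ^ 2 - th1 ^ 2 / 4)
        - (1 / y t) * ((z t - thI / 2) ^ 2 - th0 ^ 2 / 4)) :
    ∀ t ∈ U,
      DifferentiableAt ℂ (deriv y) t ∧
      deriv (deriv y) t =
        (1 / (2 * y t) + 1 / (y t - 1)) * (deriv y t) ^ 2 - deriv y t / t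
        + ((y t - 1) ^ 2 / t ^ 2) * ((th1 ^ 2 / 2) * y t + (-(th0 ^ 2 / 2)) / y t)
        + (1 + thI) * y t / t
        + (-(1 / 2) : ℂ) * y t * (y t + 1) / (y t - 1) := by
  intro t ht
  have ht0 : t ≠ 0 := fun h => hU0 (h ▸ ht)
  set F : ℂ → ℂ := fun s =>
    y s - (2 * z s * (y s - 1) ^ 2 + thI * (y s - 1)) / s with hFdef
  have hev : deriv y =ᶠ[nhds t] F := by
    filter_upwards [hU.mem_nhds ht] with s hs
    have hs0 : s ≠ 0 := fun h => hU0 (h ▸ hs)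
    simp only [hFdef]
    field_simp
    linear_combination heq1 s hs
  have hy' : HasDerivAt y (deriv y t) t := (hyd t ht).hasDerivAt
  have hz' : HasDerivAt z (deriv z t) t := (hzd t ht).hasDerivAt
  have hA : HasDerivAt (fun s => y s - 1) (deriv y t) t := hy'.sub_const 1
  have hB : HasDerivAt (fun s => (y s - 1) ^ 2)
      ((2 : ℕ) * (y t - 1) ^ (2 - 1) * deriv y t) t := hA.pow 2
  have hG : HasDerivAt (fun s => 2 * z s * (y s - 1) ^ 2 + thI * (y s - 1))
      ((2 * deriv z t) * (y t - 1) ^ 2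
        + (2 * z t) * ((2 : ℕ) * (y t - 1) ^ (2 - 1) * deriv y t)
        + thI * deriv y t) t :=
    ((hz'.const_mul 2).mul hB).add (hA.const_mul thI)
  have hQ : HasDerivAt (fun s => (2 * z s * (y s - 1) ^ 2 + thI * (y s - 1)) / s)
      ((((2 * deriv z t) * (y t - 1) ^ 2
        + (2 * z t) * ((2 : ℕ) * (y t - 1) ^ (2 - 1) * deriv y t)
        + thI * deriv y t) * t
        - (2 * z t * (y t - 1) ^ 2 + thI * (y t - 1)) * 1) / t ^ 2) t :=
    hG.div (hasDerivAt_id t) ht0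
  have hF : HasDerivAt F
      (deriv y t - (((2 * deriv z t) * (y t - 1) ^ 2
        + (2 * z t) * ((2 : ℕ) * (y t - 1) ^ (2 - 1) * deriv y t)
        + thI * deriv y t) * t
        - (2 * z t * (y t - 1) ^ 2 + thI * (y t - 1)) * 1) / t ^ 2) t := hy'.sub hQ
  have hy0t := hy0 t ht
  have hy1t : y t - 1 ≠ 0 := sub_ne_zero.mpr (hy1 t ht)
  constructor
  · exact hF.differentiableAt.congr_of_eventuallyEq hev
  · have hdd : deriv (deriv y) t = deriv F t := hev.deriv_eq
    rw [hdd, hF.deriv]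
    have h2' : t * deriv z t * y t = (y t) ^ 2 * ((z t) ^ 2 - th1 ^ 2 / 4)
        - ((z t - thI / 2) ^ 2 - th0 ^ 2 / 4) := by
      linear_combination (y t) * heq2 t ht
        + ((z t - thI / 2) ^ 2 - th0 ^ 2 / 4) * (div_mul_cancel₀ (1 : ℂ) hy0t).symm
    exact keylem t (y t) (z t) (deriv y t) (deriv z t) th0 th1 thI ht0 hy0t hy1t
      (heq1 t ht) h2'
end

section
/- Let U ⊆ ℂ be open, let ρ ∈ ℂ, let w1, w2, w3, w̃1, w̃2, w̃3 : U → ℂ be differentiable, and for τ ∈ U define the 3×3 complex matrices B1 = −i·diag(1, −1, 0), M1 = −i·diag(1, 1, 0), B0(τ) = [[−i(τ+ρ), w̃3, w2],[w3, −i(τ+ρ), w̃1],[w̃2, w1, 0]], M0(τ) = [[−i(τ+ρ), 0, w2],[0, i(τ+ρ), −w̃1],[w̃2, −w1, 0]], and A(λ,τ) = λ·B1 + B0(τ), M(λ,τ) = λ·M1 + M0(τ). Then the zero-curvature (compatibility) identity ∂A/∂τ (λ,τ) − ∂M/∂λ (λ,τ) + A(λ,τ)M(λ,τ) − M(λ,τ)A(λ,τ)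 = 0, required for all τ ∈ U and all λ ∈ ℂ, holds if and only if on U the system (P4sys) holds: w1′ = w̃2·w̃3, w̃1′ = −w2·w3, w2′ = w̃1·w̃3, w̃2′ = −w1·w3, w3′ = 2i(τ+ρ)·w3 − 2·w̃1·w̃2, w̃3′ = −2i(τ+ρ)·w̃3 + 2·w1·w2. -/
/-- Zero-curvature (compatibility) condition of the 3×3 linear system for P4 is
equivalent to the system (P4sys). -/
theorem stmt_11
    (U : Set ℂ) (hU : IsOpen U) (ρ : ℂ)
    (w1 w2 w3 wt1 wt2 wt3 : ℂ → ℂ)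
    (hw1 : ∀ τ ∈ U, DifferentiableAt ℂ w1 τ)
    (hw2 : ∀ τ ∈ U, DifferentiableAt ℂ w2 τ)
    (hw3 : ∀ τ ∈ U, DifferentiableAt ℂ w3 τ)
    (hwt1 : ∀ τ ∈ U, DifferentiableAt ℂ wt1 τ)
    (hwt2 : ∀ τ ∈ U, DifferentiableAt ℂ wt2 τ)
    (hwt3 : ∀ τ ∈ U, DifferentiableAt ℂ wt3 τ)
    (B1 M1 : Matrix (Fin 3) (Fin 3) ℂ)
    (hB1 : B1 = !![-Complex.I, 0, 0; 0, Complex.I, 0; 0, 0, 0])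
    (hM1 : M1 = !![-Complex.I, 0, 0; 0, -Complex.I, 0; 0, 0, 0])
    (B0 M0 : ℂ → Matrix (Fin 3) (Fin 3) ℂ)
    (hB0 : ∀ τ, B0 τ =
      !![-(Complex.I * (τ + ρ)), wt3 τ, w2 τ;
         w3 τ, -(Complex.I * (τ + ρ)), wt1 τ;
         wt2 τ, w1 τ, 0])
    (hM0 : ∀ τ, M0 τ =
      !![-(Complex.I * (τ + ρ)), 0, w2 τ;
         0, Complex.I * (τ + ρ), -(wt1 τ);
         wt2 τ, -(w1 τ), 0])
    (A M : ℂ → ℂ → Matrix (Fin 3) (Fin 3) ℂ)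
    (hA : ∀ lam τ, A lam τ = lam • B1 + B0 τ)
    (hM : ∀ lam τ, M lam τ = lam • M1 + M0 τ) :
    (∀ τ ∈ U, ∀ lam : ℂ, ∀ i j : Fin 3,
        deriv (fun s => A lam s i j) τ - deriv (fun mu => M mu τ i j) lam
          + ((A lam τ * M lam τ) i j - (M lam τ * A lam τ) i j) = 0)
    ↔ (∀ τ ∈ U,
        deriv w1 τ = wt2 τ * wt3 τ ∧
        deriv wt1 τ = -(w2 τ * w3 τ) ∧
        deriv w2 τ = wt1 τ * wt3 τ ∧
        deriv wt2 τ = -(w1 τ * w3 τ) ∧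
        deriv w3 τ = 2 * Complex.I * (τ + ρ) * w3 τ - 2 * (wt1 τ * wt2 τ) ∧
        deriv wt3 τ = -(2 * Complex.I * (τ + ρ)) * wt3 τ + 2 * (w1 τ * w2 τ)) := by
  have key : ∀ τ ∈ U, ∀ lam : ℂ, ∀ i j : Fin 3,
      deriv (fun s => A lam s i j) τ - deriv (fun mu => M mu τ i j) lam
        + ((A lam τ * M lam τ) i j - (M lam τ * A lam τ) i j)
      = !![0,
           deriv wt3 τ + 2 * Complex.I * (τ + ρ) * wt3 τ - 2 * (w1 τ * w2 τ),
           deriv w2 τ - wt1 τ * wt3 τ;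
           deriv w3 τ - 2 * Complex.I * (τ + ρ) * w3 τ + 2 * (wt1 τ * wt2 τ),
           0,
           deriv wt1 τ + w2 τ * w3 τ;
           deriv wt2 τ + w1 τ * w3 τ,
           deriv w1 τ - wt2 τ * wt3 τ,
           0] i j := by
    intro τ hτ lam i j
    have hdM : deriv (fun mu => M mu τ i j) lam = M1 i j := by
      have e : (fun mu => M mu τ i j) = fun mu => mu * M1 i j + M0 τ i j := by
        funext mu; rw [hM]; simp [Matrix.add_apply, Matrix.smul_apply, smul_eq_mul]
      rw [e, deriv_add_const]
      simpa using ((hasDerivAt_id lam).mul_const (M1 i j)).deriv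
    have hdA : deriv (fun s => A lam s i j) τ = deriv (fun s => B0 s i j) τ := by
      have e : (fun s => A lam s i j) = fun s => lam * B1 i j + B0 s i j := by
        funext s; rw [hA]; simp [Matrix.add_apply, Matrix.smul_apply, smul_eq_mul]
      rw [e, deriv_const_add]
    rw [hdA, hdM]
    have hdiag : deriv (fun s : ℂ => -(Complex.I * (s + ρ))) τ = -Complex.I := by
      simpa using (((hasDerivAt_id τ).add_const ρ).const_mul Complex.I).neg.deriv
    have e00 : deriv (fun s => B0 s 0 0) τ = -Complex.I := by
      have : (fun s => B0 s 0 0) = fun s : ℂ => -(Complex.I * (s + ρ)) := by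
        funext s; rw [hB0]; simp
      rw [this, hdiag]
    have e11 : deriv (fun s => B0 s 1 1) τ = -Complex.I := by
      have : (fun s => B0 s 1 1) = fun s : ℂ => -(Complex.I * (s + ρ)) := by
        funext s; rw [hB0]; simp
      rw [this, hdiag]
    have e22 : deriv (fun s => B0 s 2 2) τ = 0 := by
      have : (fun s => B0 s 2 2) = fun _ : ℂ => (0 : ℂ) := by
        funext s; rw [hB0]; simp
      rw [this, deriv_const]
    have e01 : deriv (fun s => B0 s 0 1) τ = deriv wt3 τ := by
      have : (fun s => B0 s 0 1) = wt3 := by funext s; rw [hB0]; simp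
      rw [this]
    have e02 : deriv (fun s => B0 s 0 2) τ = deriv w2 τ := by
      have : (fun s => B0 s 0 2) = w2 := by funext s; rw [hB0]; simp
      rw [this]
    have e10 : deriv (fun s => B0 s 1 0) τ = deriv w3 τ := by
      have : (fun s => B0 s 1 0) = w3 := by funext s; rw [hB0]; simp
      rw [this]
    have e12 : deriv (fun s => B0 s 1 2) τ = deriv wt1 τ := by
      have : (fun s => B0 s 1 2) = wt1 := by funext s; rw [hB0]; simp
      rw [this]
    have e20 : deriv (fun s => B0 s 2 0) τ = deriv wt2 τ := by
      have : (fun s => B0 s 2 0) = wt2 := by funext s; rw [hB0]; simp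
      rw [this]
    have e21 : deriv (fun s => B0 s 2 1) τ = deriv w1 τ := by
      have : (fun s => B0 s 2 1) = w1 := by funext s; rw [hB0]; simp
      rw [this]
    fin_cases i <;> fin_cases j <;>
      simp only [Fin.isValue, e00, e01, e02, e10, e11, e12, e20, e21, e22, hA, hM,
        hB0, hM0, hB1, hM1] <;>
      simp [Matrix.mul_apply, Fin.sum_univ_three, Matrix.add_apply, Matrix.smul_apply,
        smul_eq_mul, Matrix.cons_val_zero, Matrix.cons_val_one, Matrix.head_cons,
        Matrix.cons_val_two, Matrix.tail_cons, Matrix.vecHead, Matrix.vecTail] <;>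
      ring
  constructor
  · intro h τ hτ
    have H : ∀ i j : Fin 3,
        (!![(0:ℂ),
           deriv wt3 τ + 2 * Complex.I * (τ + ρ) * wt3 τ - 2 * (w1 τ * w2 τ),
           deriv w2 τ - wt1 τ * wt3 τ;
           deriv w3 τ - 2 * Complex.I * (τ + ρ) * w3 τ + 2 * (wt1 τ * wt2 τ),
           0,
           deriv wt1 τ + w2 τ * w3 τ;
           deriv wt2 τ + w1 τ * w3 τ,
           deriv w1 τ - wt2 τ * wt3 τ,
           0] : Matrix (Fin 3) (Fin 3) ℂ) i j = 0 := fun i j =>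
      (key τ hτ 0 i j).symm.trans (h τ hτ 0 i j)
    refine ⟨?_, ?_, ?_, ?_, ?_, ?_⟩
    · have := H 2 1; simp at this; linear_combination this
    · have := H 1 2; simp at this; linear_combination this
    · have := H 0 2; simp at this; linear_combination this
    · have := H 2 0; simp at this; linear_combination this
    · have := H 1 0; simp at this; linear_combination this
    · have := H 0 1; simp at this; linear_combination this
  · intro h τ hτ lam i j
    rw [key τ hτ lam i j]
    obtain ⟨h1, h2, h3, h4, h5, h6⟩ := h τ hτ
    fin_cases i <;> fin_cases j <;>
      simp [Matrix.cons_val_zero, Matrix.cons_val_one, Matrix.head_cons,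
        Matrix.cons_val_two, Matrix.tail_cons] <;>
      first
        | linear_combination h1
        | linear_combination h2
        | linear_combination h3
        | linear_combination h4
        | linear_combination h5
        | linear_combination h6
end

section
/- Let U ⊆ ℂ be open and connected, let ρ, θ0, θ∞ ∈ ℂ, and let w1, w2, w3, w̃1, w̃2, w̃3 : U → ℂ be differentiable functions satisfying system (P4sys): w1′ = w̃2·w̃3, w̃1′ = −w2·w3, w2′ = w̃1·w̃3, w̃2′ = −w1·w3, w3′ = 2i(τ+ρ)·w3 − 2·w̃1·w̃2, w̃3′ = −2i(τ+ρ)·w̃3 + 2·w1·w2, together with the first-integral relations w1·w̃1 − w2·w̃2 = 2i·θ0 and w1·w̃1 + w2·w̃2 + w3·w̃3 = 2i·θ∞ identically on U. Assume w1, w2, and w̃3 are nonvanishing on U. Define ỹ := −2·w1·w2/w̃3 and z̃ := w1·w̃1. Then (ỹ, z̃) satisfy the system (eq:yz-P4): ỹ′ = −4z̃ + ỹ² + 2i(τ+ρ)·ỹ + 4iθ0 and z̃′ = −ỹ·(z̃ − i(θ0+θ∞)) − (2/ỹ)·z̃·(z̃ − 2iθ0). -/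
/-- From solutions of (P4sys) with the first-integral normalizations, the functions
ỹ, z̃ defined in (P4-eqn) satisfy the system (eq:yz-P4). -/
theorem stmt_13
    (U : Set ℂ) (hU : IsOpen U) (hUconn : IsPreconnected U)
    (ρ th0 thI : ℂ)
    (w1 w2 w3 wt1 wt2 wt3 : ℂ → ℂ)
    (hd1 : ∀ τ ∈ U, DifferentiableAt ℂ w1 τ)
    (hd2 : ∀ τ ∈ U, DifferentiableAt ℂ w2 τ)
    (hd3 : ∀ τ ∈ U, DifferentiableAt ℂ w3 τ)
    (hdt1 : ∀ τ ∈ U, DifferentiableAt ℂ wt1 τ)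
    (hdt2 : ∀ τ ∈ U, DifferentiableAt ℂ wt2 τ)
    (hdt3 : ∀ τ ∈ U, DifferentiableAt ℂ wt3 τ)
    (he1 : ∀ τ ∈ U, deriv w1 τ = wt2 τ * wt3 τ)
    (he2 : ∀ τ ∈ U, deriv wt1 τ = -(w2 τ * w3 τ))
    (he3 : ∀ τ ∈ U, deriv w2 τ = wt1 τ * wt3 τ)
    (he4 : ∀ τ ∈ U, deriv wt2 τ = -(w1 τ * w3 τ))
    (he5 : ∀ τ ∈ U, deriv w3 τ = 2 * Complex.I * (τ + ρ) * w3 τ - 2 * (wt1 τ * wt2 τ))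
    (he6 : ∀ τ ∈ U, deriv wt3 τ = -(2 * Complex.I * (τ + ρ)) * wt3 τ + 2 * (w1 τ * w2 τ))
    (hint1 : ∀ τ ∈ U, w1 τ * wt1 τ - w2 τ * wt2 τ = 2 * Complex.I * th0)
    (hint2 : ∀ τ ∈ U, w1 τ * wt1 τ + w2 τ * wt2 τ + w3 τ * wt3 τ = 2 * Complex.I * thI)
    (hn1 : ∀ τ ∈ U, w1 τ ≠ 0) (hn2 : ∀ τ ∈ U, w2 τ ≠ 0) (hn3 : ∀ τ ∈ U, wt3 τ ≠ 0)
    (yt zt : ℂ → ℂ)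
    (hyt : yt = fun τ => -(2 * w1 τ * w2 τ / wt3 τ))
    (hzt : zt = fun τ => w1 τ * wt1 τ) :
    ∀ τ ∈ U,
      DifferentiableAt ℂ yt τ ∧ DifferentiableAt ℂ zt τ ∧
      deriv yt τ = -(4 * zt τ) + (yt τ) ^ 2 + 2 * Complex.I * (τ + ρ) * yt τ
        + 4 * Complex.I * th0 ∧
      deriv zt τ = -(yt τ * (zt τ - Complex.I * (th0 + thI)))
        - (2 / yt τ) * zt τ * (zt τ - 2 * Complex.I * th0) := by

  subst hyt hzt
  intro τ hτ
  have h1 : HasDerivAt w1 (wt2 τ * wt3 τ) τ := he1 τ hτ ▸ (hd1 τ hτ).hasDerivAt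
  have h2 : HasDerivAt w2 (wt1 τ * wt3 τ) τ := he3 τ hτ ▸ (hd2 τ hτ).hasDerivAt
  have ht1 : HasDerivAt wt1 (-(w2 τ * w3 τ)) τ := he2 τ hτ ▸ (hdt1 τ hτ).hasDerivAt
  have ht3 : HasDerivAt wt3 (-(2 * Complex.I * (τ + ρ)) * wt3 τ + 2 * (w1 τ * w2 τ)) τ :=
    he6 τ hτ ▸ (hdt3 τ hτ).hasDerivAt
  have hn3' := hn3 τ hτ
  have hy : HasDerivAt (fun τ => -(2 * w1 τ * w2 τ / wt3 τ))
      (-(((2 * (wt2 τ * wt3 τ) * w2 τ + 2 * w1 τ * (wt1 τ * wt3 τ)) * wt3 τ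
        - 2 * w1 τ * w2 τ * (-(2 * Complex.I * (τ + ρ)) * wt3 τ + 2 * (w1 τ * w2 τ)))
        / wt3 τ ^ 2)) τ :=
    (((h1.const_mul 2).mul h2).div ht3 hn3').neg
  have hz : HasDerivAt (fun τ => w1 τ * wt1 τ)
      (wt2 τ * wt3 τ * wt1 τ + w1 τ * -(w2 τ * w3 τ)) τ := h1.mul ht1
  have i1 := hint1 τ hτ
  have i2 := hint2 τ hτ
  have hn1' := hn1 τ hτ
  have hn2' := hn2 τ hτ
  refine ⟨hy.differentiableAt, hz.differentiableAt, ?_, ?_⟩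
  · rw [hy.deriv]
    field_simp
    ring_nf
    linear_combination (2 * wt3 τ ^ 2) * i1
  · rw [hz.deriv]
    have hyne : -(2 * w1 τ * w2 τ / wt3 τ) ≠ 0 := by
      exact neg_ne_zero.mpr (div_ne_zero (mul_ne_zero (mul_ne_zero two_ne_zero hn1') hn2') hn3')
    field_simp
    ring_nf
    linear_combination (-(wt3 τ ^ 2 * wt1 τ + w2 τ ^ 2 * w1 τ)) * i1 - w2 τ ^ 2 * w1 τ * i2
end

section
/- Let U ⊆ ℂ be open, let ρ, θ0, θ∞ ∈ ℂ, and let ỹ, z̃ : U → ℂ be differentiable with ỹ nonvanishing on U, satisfying the system (eq:yz-P4): ỹ′ = −4z̃ + ỹ² + 2i(τ+ρ)·ỹ + 4iθ0 and z̃′ = −ỹ·(z̃ − i(θ0+θ∞)) − (2/ỹ)·z̃·(z̃ − 2iθ0). Then (i) ỹ is twice differentiable and satisfies ỹ″ = (1/(2ỹ))·(ỹ′)² + (3/2)·ỹ³ + 4i(τ+ρ)·ỹ² + 2·(−(τ+ρ)² + i(1 − 2θ∞))·ỹ + 8θ0²/ỹ on U; and (ii) the function y defined by y(t) := e^{−iπ/4}·ỹ(e^{−iπ/4}·t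 − ρ), on the open set of t ∈ ℂ with e^{−iπ/4}·t − ρ ∈ U, satisfies the fourth Painlevé equation P4: y″ = (1/(2y))·(y′)² + (3/2)·y³ + 4t·y² + 2(t² − α)·y + β/y, with parameters α = 2θ∞ − 1 and β = −8θ0². -/
set_option maxHeartbeats 1000000 in
/-- The system (eq:yz-P4) implies a second-order ODE for ỹ, and after the rotation
of variables the function y solves the fourth Painlevé equation with
α = 2θ∞ − 1 and β = −8θ0². -/
theorem stmt_14
    (U : Set ℂ) (hU : IsOpen U)
    (ρ th0 thI : ℂ)
    (yt zt : ℂ → ℂ)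
    (hyd : ∀ τ ∈ U, DifferentiableAt ℂ yt τ)
    (hzd : ∀ τ ∈ U, DifferentiableAt ℂ zt τ)
    (hyne : ∀ τ ∈ U, yt τ ≠ 0)
    (heq1 : ∀ τ ∈ U, deriv yt τ = -(4 * zt τ) + (yt τ) ^ 2
        + 2 * Complex.I * (τ + ρ) * yt τ + 4 * Complex.I * th0)
    (heq2 : ∀ τ ∈ U, deriv zt τ = -(yt τ * (zt τ - Complex.I * (th0 + thI)))
        - (2 / yt τ) * zt τ * (zt τ - 2 * Complex.I * th0))
    (c : ℂ) (hc : c = Complex.exp (-((Real.pi : ℂ) * Complex.I) / 4))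
    (y : ℂ → ℂ) (hy : y = fun t => c * yt (c * t - ρ)) :
    (∀ τ ∈ U,
      DifferentiableAt ℂ (deriv yt) τ ∧
      deriv (deriv yt) τ = (1 / (2 * yt τ)) * (deriv yt τ) ^ 2 + (3 / 2) * (yt τ) ^ 3
        + 4 * Complex.I * (τ + ρ) * (yt τ) ^ 2
        + 2 * (-((τ + ρ) ^ 2) + Complex.I * (1 - 2 * thI)) * yt τ
        + 8 * th0 ^ 2 / yt τ) ∧
    (∀ t : ℂ, c * t - ρ ∈ U →
      DifferentiableAt ℂ y t ∧ DifferentiableAt ℂ (deriv y) t ∧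
      deriv (deriv y) t = (1 / (2 * y t)) * (deriv y t) ^ 2 + (3 / 2) * (y t) ^ 3
        + 4 * t * (y t) ^ 2 + 2 * (t ^ 2 - (2 * thI - 1)) * y t
        + (-(8 * th0 ^ 2)) / y t) := by
  have hc2 : c ^ 2 = -Complex.I := by
    rw [hc, ← Complex.exp_nat_mul]
    have h2 : (2 : ℕ) * (-((Real.pi : ℂ) * Complex.I) / 4) = -(↑Real.pi / 2) * Complex.I := by
      push_cast; ring
    rw [h2, Complex.exp_mul_I, Complex.cos_neg, Complex.sin_neg,
      Complex.cos_pi_div_two, Complex.sin_pi_div_two]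
    ring
  have hcne : c ≠ 0 := by rw [hc]; exact Complex.exp_ne_zero _
  have part1 : ∀ τ ∈ U,
      DifferentiableAt ℂ (deriv yt) τ ∧
      deriv (deriv yt) τ = (1 / (2 * yt τ)) * (deriv yt τ) ^ 2 + (3 / 2) * (yt τ) ^ 3
        + 4 * Complex.I * (τ + ρ) * (yt τ) ^ 2
        + 2 * (-((τ + ρ) ^ 2) + Complex.I * (1 - 2 * thI)) * yt τ
        + 8 * th0 ^ 2 / yt τ := by
    intro τ hτ
    have hyD := (hyd τ hτ).hasDerivAt
    have hzD := (hzd τ hτ).hasDerivAt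
    -- g is the RHS of heq1
    have hgD : HasDerivAt
        (fun s => -(4 * zt s) + (yt s) ^ 2 + 2 * Complex.I * (s + ρ) * yt s
          + 4 * Complex.I * th0)
        (-(4 * deriv zt τ) + 2 * yt τ * deriv yt τ
          + (2 * Complex.I * yt τ + 2 * Complex.I * (τ + ρ) * deriv yt τ)) τ := by
      have h1 : HasDerivAt (fun s => -(4 * zt s)) (-(4 * deriv zt τ)) τ :=
        (hzD.const_mul 4).neg
      have h2 : HasDerivAt (fun s => (yt s) ^ 2) (2 * yt τ * deriv yt τ) τ := by
        exact (hyD.pow 2).congr_deriv (by norm_num)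
      have h3 : HasDerivAt (fun s => 2 * Complex.I * (s + ρ) * yt s)
          (2 * Complex.I * yt τ + 2 * Complex.I * (τ + ρ) * deriv yt τ) τ := by
        have ha : HasDerivAt (fun s : ℂ => 2 * Complex.I * (s + ρ)) (2 * Complex.I) τ := by
          simpa using (((hasDerivAt_id τ).add_const ρ).const_mul (2 * Complex.I))
        exact ha.mul hyD
      exact ((h1.add h2).add h3).add_const _
    have hev : deriv yt =ᶠ[nhds τ] (fun s => -(4 * zt s) + (yt s) ^ 2
        + 2 * Complex.I * (s + ρ) * yt s + 4 * Complex.I * th0) :=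
      Filter.eventuallyEq_of_mem (hU.mem_nhds hτ) (fun s hs => heq1 s hs)
    have hdiff : DifferentiableAt ℂ (deriv yt) τ :=
      hev.differentiableAt_iff.mpr hgD.differentiableAt
    refine ⟨hdiff, ?_⟩
    have hdd : deriv (deriv yt) τ = -(4 * deriv zt τ) + 2 * yt τ * deriv yt τ
        + (2 * Complex.I * yt τ + 2 * Complex.I * (τ + ρ) * deriv yt τ) := by
      rw [hev.deriv_eq, hgD.deriv]
    rw [hdd, heq2 τ hτ]
    have hz : zt τ = ((yt τ) ^ 2 + 2 * Complex.I * (τ + ρ) * yt τ + 4 * Complex.I * th0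
        - deriv yt τ) / 4 := by
      linear_combination ((1 : ℂ)/4) * heq1 τ hτ
    rw [hz]
    have hne := hyne τ hτ
    field_simp
    linear_combination (16 * (yt τ)^2 * (τ + ρ)^2 - 64 * th0^2) * Complex.I_sq
  refine ⟨part1, ?_⟩
  have hVopen : IsOpen {s : ℂ | c * s - ρ ∈ U} := by
    have : Continuous fun s : ℂ => c * s - ρ := by continuity
    exact this.isOpen_preimage U hU
  have hinner : ∀ s : ℂ, HasDerivAt (fun s : ℂ => c * s - ρ) c s := by
    intro s
    simpa using ((hasDerivAt_id s).const_mul c).sub_const ρ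
  have hyD : ∀ s : ℂ, c * s - ρ ∈ U →
      HasDerivAt y (c ^ 2 * deriv yt (c * s - ρ)) s := by
    intro s hs
    have h1 := ((hyd _ hs).hasDerivAt.comp s (hinner s)).const_mul c
    rw [hy]
    exact h1.congr_deriv (by ring)
  have hdy : ∀ s : ℂ, c * s - ρ ∈ U → deriv y s = c ^ 2 * deriv yt (c * s - ρ) :=
    fun s hs => (hyD s hs).deriv
  intro t ht
  refine ⟨(hyD t ht).differentiableAt, ?_, ?_⟩
  · -- deriv y eventually equals G
    have hev : deriv y =ᶠ[nhds t] (fun s => c ^ 2 * deriv yt (c * s - ρ)) :=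
      Filter.eventuallyEq_of_mem (hVopen.mem_nhds ht) (fun s hs => hdy s hs)
    have hGd : DifferentiableAt ℂ (fun s => c ^ 2 * deriv yt (c * s - ρ)) t := by
      have := ((part1 _ ht).1.comp t ((hinner t).differentiableAt)).const_mul (c ^ 2)
      simpa [Function.comp] using this
    exact hev.differentiableAt_iff.mpr hGd
  · have hev : deriv y =ᶠ[nhds t] (fun s => c ^ 2 * deriv yt (c * s - ρ)) :=
      Filter.eventuallyEq_of_mem (hVopen.mem_nhds ht) (fun s hs => hdy s hs)
    have hGD : HasDerivAt (fun s => c ^ 2 * deriv yt (c * s - ρ))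
        (c ^ 3 * deriv (deriv yt) (c * t - ρ)) t := by
      have h1 := ((part1 _ ht).1.hasDerivAt.comp t (hinner t)).const_mul (c ^ 2)
      exact h1.congr_deriv (by ring)
    have hdd : deriv (deriv y) t = c ^ 3 * deriv (deriv yt) (c * t - ρ) := by
      rw [hev.deriv_eq, hGD.deriv]
    rw [hdd, (part1 _ ht).2, hdy t ht, hy]
    simp only
    have hne := hyne _ ht
    have hτρ : c * t - ρ + ρ = c * t := by ring
    rw [hτρ]
    have hI : Complex.I = -(c^2) := by rw [hc2]; ring
    have hc4 : c ^ 4 = -1 := by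
      have : c ^ 4 = (c ^ 2) ^ 2 := by ring
      rw [this, hc2]; simp [Complex.I_sq]
    field_simp [hne, hcne]
    have hD : (2 * (c * yt (c * t - ρ)) * 2 * (c * yt (c * t - ρ)) : ℂ) ≠ 0 := by
      simp [hcne, hne]
    have hc5 : c ^ 5 = -c := by linear_combination c * hc4
    have hc7 : c ^ 7 = -(c ^ 3) := by linear_combination c ^ 3 * hc4
    have hc8 : c ^ 8 = 1 := by linear_combination (c ^ 4 - 1) * hc4
    have hc6 : c ^ 6 = -(c ^ 2) := by linear_combination c ^ 2 * hc4
    rw [hI]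
    ring_nf
    simp only [hc5, hc6, hc7, hc8, hc4]
    ring
end

section
/- Let U ⊆ ℂ be open, let ρ, θ0, θ∞ ∈ ℂ, and let ỹ, z̃ : U → ℂ be differentiable with ỹ nonvanishing on U, satisfying the system (eq:yz-P4): ỹ′ = −4z̃ + ỹ² + 2i(τ+ρ)·ỹ + 4iθ0 and z̃′ = −ỹ·(z̃ − i(θ0+θ∞)) − (2/ỹ)·z̃·(z̃ − 2iθ0). Define σ̃ : U → ℂ by i·σ̃ = −ỹ·(z̃ − iθ0 − iθ∞) + 2·z̃·(z̃ − 2iθ0)/ỹ − 2i(τ+ρ)·z̃. Then σ̃ is twice differentiable, σ̃′ = −2z̃ on U, and σ̃ satisfies the second-order second-degree (SD) equation (eq:sigma-P4): (σ̃″)² = −4·((τ+ρ)·σ̃′ − σ̃)² − 4·σ̃′·(σ̃′ + 4iθ0)·(σ̃′ + 2iθ0 + 2iθ∞) at every point of U. -/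
/-- The sigma-function of (eq:yz-P4): σ̃′ = −2z̃ and σ̃ satisfies the SD equation
(eq:sigma-P4). -/
theorem stmt_15
    (U : Set ℂ) (hU : IsOpen U)
    (ρ th0 thI : ℂ)
    (yt zt : ℂ → ℂ)
    (hyd : ∀ τ ∈ U, DifferentiableAt ℂ yt τ)
    (hzd : ∀ τ ∈ U, DifferentiableAt ℂ zt τ)
    (hyne : ∀ τ ∈ U, yt τ ≠ 0)
    (heq1 : ∀ τ ∈ U, deriv yt τ = -(4 * zt τ) + (yt τ) ^ 2
        + 2 * Complex.I * (τ + ρ) * yt τ + 4 * Complex.I * th0)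
    (heq2 : ∀ τ ∈ U, deriv zt τ = -(yt τ * (zt τ - Complex.I * (th0 + thI)))
        - (2 / yt τ) * zt τ * (zt τ - 2 * Complex.I * th0))
    (st : ℂ → ℂ)
    (hst : ∀ τ ∈ U, Complex.I * st τ
      = -(yt τ * (zt τ - Complex.I * th0 - Complex.I * thI))
        + 2 * zt τ * (zt τ - 2 * Complex.I * th0) / yt τ
        - 2 * Complex.I * (τ + ρ) * zt τ) :
    ∀ τ ∈ U,
      DifferentiableAt ℂ st τ ∧ DifferentiableAt ℂ (deriv st) τ ∧
      deriv st τ = -(2 * zt τ) ∧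
      (deriv (deriv st) τ) ^ 2
        = -(4 * ((τ + ρ) * deriv st τ - st τ) ^ 2)
          - 4 * deriv st τ * (deriv st τ + 4 * Complex.I * th0)
            * (deriv st τ + 2 * Complex.I * th0 + 2 * Complex.I * thI) := by
  set I := Complex.I with hI
  -- explicit formula for st on U
  have hstval : ∀ τ ∈ U, st τ
      = -I * (-(yt τ * (zt τ - I * th0 - I * thI))
        + 2 * zt τ * (zt τ - 2 * I * th0) / yt τ
        - 2 * I * (τ + ρ) * zt τ) := by
    intro τ hτ
    have h := hst τ hτ
    have : -I * (I * st τ) = st τ := by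
      have := Complex.I_sq
      rw [hI]; ring_nf
      rw [Complex.I_sq]; ring
    rw [← this, h]
  -- st has derivative -(2 * zt τ) at each point of U
  have hds : ∀ τ ∈ U, HasDerivAt st (-(2 * zt τ)) τ := by
    intro τ hτ
    have hy := (hyd τ hτ).hasDerivAt
    have hz := (hzd τ hτ).hasDerivAt
    have hyne' := hyne τ hτ
    have h1 : HasDerivAt (fun t => yt t * (zt t - I * th0 - I * thI))
        (deriv yt τ * (zt τ - I * th0 - I * thI) + yt τ * deriv zt τ) τ := by
      simpa using hy.fun_mul ((hz.sub_const (I * th0)).sub_const (I * thI))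
    have h2 : HasDerivAt (fun t => 2 * zt t * (zt t - 2 * I * th0) / yt t)
        (((2 * deriv zt τ * (zt τ - 2 * I * th0) + 2 * zt τ * deriv zt τ) * yt τ
          - 2 * zt τ * (zt τ - 2 * I * th0) * deriv yt τ) / (yt τ) ^ 2) τ := by
      have hnum : HasDerivAt (fun t => 2 * zt t * (zt t - 2 * I * th0))
          (2 * deriv zt τ * (zt τ - 2 * I * th0) + 2 * zt τ * deriv zt τ) τ := by
        simpa [mul_comm, mul_assoc, mul_left_comm] using
          (hz.const_mul 2).fun_mul (hz.sub_const (2 * I * th0))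
      exact hnum.div hy hyne'
    have h3 : HasDerivAt (fun t => 2 * I * (t + ρ) * zt t)
        (2 * I * zt τ + 2 * I * (τ + ρ) * deriv zt τ) τ := by
      have ha : HasDerivAt (fun t : ℂ => 2 * I * (t + ρ)) (2 * I) τ := by
        simpa using ((hasDerivAt_id τ).add_const ρ).const_mul (2 * I)
      simpa using ha.fun_mul hz
    have hF : HasDerivAt (fun t => -I * (-(yt t * (zt t - I * th0 - I * thI))
        + 2 * zt t * (zt t - 2 * I * th0) / yt t
        - 2 * I * (t + ρ) * zt t))
        (-I * (-(deriv yt τ * (zt τ - I * th0 - I * thI) + yt τ * deriv zt τ)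
          + ((2 * deriv zt τ * (zt τ - 2 * I * th0) + 2 * zt τ * deriv zt τ) * yt τ
          - 2 * zt τ * (zt τ - 2 * I * th0) * deriv yt τ) / (yt τ) ^ 2
          - (2 * I * zt τ + 2 * I * (τ + ρ) * deriv zt τ))) τ :=
      ((h1.neg.add h2).sub h3).const_mul (-I)
    have hcongr : HasDerivAt st
        (-I * (-(deriv yt τ * (zt τ - I * th0 - I * thI) + yt τ * deriv zt τ)
          + ((2 * deriv zt τ * (zt τ - 2 * I * th0) + 2 * zt τ * deriv zt τ) * yt τ
          - 2 * zt τ * (zt τ - 2 * I * th0) * deriv yt τ) / (yt τ) ^ 2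
          - (2 * I * zt τ + 2 * I * (τ + ρ) * deriv zt τ))) τ := by
      apply hF.congr_of_eventuallyEq
      filter_upwards [hU.mem_nhds hτ] with t ht
      exact hstval t ht
    have key : -I * (-(deriv yt τ * (zt τ - I * th0 - I * thI) + yt τ * deriv zt τ)
          + ((2 * deriv zt τ * (zt τ - 2 * I * th0) + 2 * zt τ * deriv zt τ) * yt τ
          - 2 * zt τ * (zt τ - 2 * I * th0) * deriv yt τ) / (yt τ) ^ 2
          - (2 * I * zt τ + 2 * I * (τ + ρ) * deriv zt τ)) = -(2 * zt τ) := by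
      rw [heq1 τ hτ, heq2 τ hτ, hI]
      have hIsq := Complex.I_sq
      field_simp
      ring_nf
      rw [Complex.I_sq]
      ring
    rwa [key] at hcongr
  intro τ hτ
  have hd1 : DifferentiableAt ℂ st τ := (hds τ hτ).differentiableAt
  have hderiv : ∀ t ∈ U, deriv st t = -(2 * zt t) := fun t ht => (hds t ht).deriv
  have hderiveq : deriv st =ᶠ[nhds τ] fun t => -(2 * zt t) := by
    filter_upwards [hU.mem_nhds hτ] with t ht
    exact hderiv t ht
  have hd2' : DifferentiableAt ℂ (fun t => -(2 * zt t)) τ := by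
    exact ((hzd τ hτ).const_mul 2).neg
  have hd2 : DifferentiableAt ℂ (deriv st) τ := hd2'.congr_of_eventuallyEq hderiveq
  have hdd : deriv (deriv st) τ = -(2 * deriv zt τ) := by
    rw [hderiveq.deriv_eq]
    have : deriv (fun t => -(2 * zt t)) τ = -(2 * deriv zt τ) := by
      simpa using (((hzd τ hτ).hasDerivAt.const_mul 2).neg).deriv
    exact this
  refine ⟨hd1, hd2, hderiv τ hτ, ?_⟩
  rw [hdd, hderiv τ hτ, heq2 τ hτ, hstval τ hτ, hI]
  have hyne' := hyne τ hτ
  have h2 : Complex.I ^ 2 = -1 := Complex.I_sq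
  have h3 : Complex.I ^ 3 = -Complex.I := by rw [pow_succ, h2]; ring
  have h4 : Complex.I ^ 4 = 1 := by rw [pow_succ, h3]; simp [Complex.I_mul_I]
  field_simp
  ring_nf
  rw [h2, h3, h4]
  ring
end

section
/- (Similarity reduction of the coupled 3WRI system to the P4 reduced system.) Let ρ ∈ ℂ, and let v1, v2, v3, v1*, v2*, v3* : ℝ → ℂ be differentiable functions satisfying, with φ(τ) := (τ + ρ)², the system e^{iφ(τ)}·v_j′(τ) = i·v_m*(τ)·v_n*(τ) and e^{−iφ(τ)}·(v_j*)′(τ) = −i·v_m(τ)·v_n(τ) for every cyclic permutation (j, m, n) of (1, 2, 3). Define φ1(x1,x2,x3) = ρ·x3 + x3²/2 + 2·x2·x3 + ρ²/2, φ2(x1,x2,x3) = ρ·x3 + x3²/2 + 2·x3·x1 + ρ²/2, φ3(x1,x2,x3) = 2ρ·(x1+x2) + (x1+x2)², and set u_j(x1,x2,x3) := e^{i·φ_j(x1,x2,x3)}·v_j(x1+x2+x3) and u_j*(x1,x2,x3) := e^{−i·φ_j(x1,x2,x3)}·v_j*(x1+x2+x3) for j = 1, 2, 3. Then the functions u_j,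 u_j* : ℝ³ → ℂ satisfy the coupled three-wave resonant interaction system: ∂u_j/∂x_j = i·u_m*·u_n* and ∂u_j*/∂x_j = −i·u_m·u_n for every cyclic permutation (j, m, n) of (1, 2, 3). -/
lemma dhelp (f : ℝ → ℂ) (hf : ∀ t, DifferentiableAt ℝ f t) (c : ℂ) (a x : ℝ) :
    deriv (fun s => c * f (s + a)) x = c * deriv f (x + a) := by
  have hd : DifferentiableAt ℝ (fun s : ℝ => f (s + a)) x := by
    exact (hf (x + a)).comp x (differentiableAt_id.add_const a)
  rw [deriv_const_mul _ hd, deriv_comp_add_const]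

lemma exp_split {E A B Φ : ℂ} (h : E = -A + -B + Φ) :
    Complex.exp E = Complex.exp (-A) * Complex.exp (-B) * Complex.exp Φ := by
  rw [h, Complex.exp_add, Complex.exp_add]

lemma exp_split' {E A B Φ : ℂ} (h : -E = A + B + -Φ) :
    Complex.exp (-E) = Complex.exp A * Complex.exp B * Complex.exp (-Φ) := by
  rw [h, Complex.exp_add, Complex.exp_add]

lemma case_core {E A B Φ D J2 J3 : ℂ}
    (hE : Complex.exp E = Complex.exp (-A) * Complex.exp (-B) * Complex.exp Φ)
    (h : Complex.exp Φ * D = Complex.I * J2 * J3) :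
    Complex.exp E * D = Complex.I * (Complex.exp (-A) * J2) * (Complex.exp (-B) * J3) := by
  rw [hE, mul_assoc, h]; ring

lemma case_core' {E A B Φ D J2 J3 : ℂ}
    (hE : Complex.exp (-E) = Complex.exp A * Complex.exp B * Complex.exp (-Φ))
    (h : Complex.exp (-Φ) * D = -(Complex.I * J2 * J3)) :
    Complex.exp (-E) * D = -(Complex.I * (Complex.exp A * J2) * (Complex.exp B * J3)) := by
  rw [hE, mul_assoc, h]; ring

/-- Similarity reduction of the coupled (2+1)-dimensional 3WRI system to the P4
reduced system: solutions of the reduced ODE system yield solutions of the coupled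
three-wave resonant interaction system. -/
theorem stmt_16
    (ρ : ℂ)
    (v1 v2 v3 vs1 vs2 vs3 : ℝ → ℂ)
    (hv1 : ∀ τ : ℝ, DifferentiableAt ℝ v1 τ)
    (hv2 : ∀ τ : ℝ, DifferentiableAt ℝ v2 τ)
    (hv3 : ∀ τ : ℝ, DifferentiableAt ℝ v3 τ)
    (hvs1 : ∀ τ : ℝ, DifferentiableAt ℝ vs1 τ)
    (hvs2 : ∀ τ : ℝ, DifferentiableAt ℝ vs2 τ)
    (hvs3 : ∀ τ : ℝ, DifferentiableAt ℝ vs3 τ)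
    (φ : ℝ → ℂ) (hφ : φ = fun (τ : ℝ) => ((τ : ℂ) + ρ) ^ 2)
    (he1 : ∀ τ : ℝ, Complex.exp (Complex.I * φ τ) * deriv v1 τ
      = Complex.I * vs2 τ * vs3 τ)
    (he2 : ∀ τ : ℝ, Complex.exp (Complex.I * φ τ) * deriv v2 τ
      = Complex.I * vs3 τ * vs1 τ)
    (he3 : ∀ τ : ℝ, Complex.exp (Complex.I * φ τ) * deriv v3 τ
      = Complex.I * vs1 τ * vs2 τ)
    (hes1 : ∀ τ : ℝ, Complex.exp (-(Complex.I * φ τ)) * deriv vs1 τ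
      = -(Complex.I * v2 τ * v3 τ))
    (hes2 : ∀ τ : ℝ, Complex.exp (-(Complex.I * φ τ)) * deriv vs2 τ
      = -(Complex.I * v3 τ * v1 τ))
    (hes3 : ∀ τ : ℝ, Complex.exp (-(Complex.I * φ τ)) * deriv vs3 τ
      = -(Complex.I * v1 τ * v2 τ))
    (φ1 φ2 φ3 : ℝ → ℝ → ℝ → ℂ)
    (hφ1 : φ1 = fun (_ x2 x3 : ℝ) => ρ * (x3 : ℂ) + (x3 : ℂ) ^ 2 / 2
      + 2 * (x2 : ℂ) * (x3 : ℂ) + ρ ^ 2 / 2)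
    (hφ2 : φ2 = fun (x1 _ x3 : ℝ) => ρ * (x3 : ℂ) + (x3 : ℂ) ^ 2 / 2
      + 2 * (x3 : ℂ) * (x1 : ℂ) + ρ ^ 2 / 2)
    (hφ3 : φ3 = fun (x1 x2 _ : ℝ) => 2 * ρ * ((x1 : ℂ) + (x2 : ℂ))
      + ((x1 : ℂ) + (x2 : ℂ)) ^ 2)
    (u1 u2 u3 us1 us2 us3 : ℝ → ℝ → ℝ → ℂ)
    (hu1 : u1 = fun x1 x2 x3 =>
      Complex.exp (Complex.I * φ1 x1 x2 x3) * v1 (x1 + x2 + x3))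
    (hu2 : u2 = fun x1 x2 x3 =>
      Complex.exp (Complex.I * φ2 x1 x2 x3) * v2 (x1 + x2 + x3))
    (hu3 : u3 = fun x1 x2 x3 =>
      Complex.exp (Complex.I * φ3 x1 x2 x3) * v3 (x1 + x2 + x3))
    (hus1 : us1 = fun x1 x2 x3 =>
      Complex.exp (-(Complex.I * φ1 x1 x2 x3)) * vs1 (x1 + x2 + x3))
    (hus2 : us2 = fun x1 x2 x3 =>
      Complex.exp (-(Complex.I * φ2 x1 x2 x3)) * vs2 (x1 + x2 + x3))
    (hus3 : us3 = fun x1 x2 x3 =>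
      Complex.exp (-(Complex.I * φ3 x1 x2 x3)) * vs3 (x1 + x2 + x3)) :
    (∀ x1 x2 x3 : ℝ, deriv (fun s => u1 s x2 x3) x1
      = Complex.I * us2 x1 x2 x3 * us3 x1 x2 x3) ∧
    (∀ x1 x2 x3 : ℝ, deriv (fun s => u2 x1 s x3) x2
      = Complex.I * us3 x1 x2 x3 * us1 x1 x2 x3) ∧
    (∀ x1 x2 x3 : ℝ, deriv (fun s => u3 x1 x2 s) x3
      = Complex.I * us1 x1 x2 x3 * us2 x1 x2 x3) ∧
    (∀ x1 x2 x3 : ℝ, deriv (fun s => us1 s x2 x3) x1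
      = -(Complex.I * u2 x1 x2 x3 * u3 x1 x2 x3)) ∧
    (∀ x1 x2 x3 : ℝ, deriv (fun s => us2 x1 s x3) x2
      = -(Complex.I * u3 x1 x2 x3 * u1 x1 x2 x3)) ∧
    (∀ x1 x2 x3 : ℝ, deriv (fun s => us3 x1 x2 s) x3
      = -(Complex.I * u1 x1 x2 x3 * u2 x1 x2 x3)) := by
  refine ⟨?_, ?_, ?_, ?_, ?_, ?_⟩ <;> intro x1 x2 x3 <;>
    simp only [hu1, hu2, hu3, hus1, hus2, hus3, hφ1, hφ2, hφ3, add_assoc]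
  · rw [dhelp v1 hv1]
    exact case_core (exp_split (by rw [hφ]; push_cast; ring))
      (he1 (x1 + (x2 + x3)))
  · have harg : ∀ c : ℂ, (fun s : ℝ => c * v2 (x1 + (s + x3)))
        = fun s => c * v2 (s + (x1 + x3)) := by
      intro c; funext s; rw [show x1 + (s + x3) = s + (x1 + x3) by ring]
    rw [harg, dhelp v2 hv2, show x2 + (x1 + x3) = x1 + (x2 + x3) by ring]
    exact case_core (exp_split (by rw [hφ]; push_cast; ring))
      (he2 (x1 + (x2 + x3)))
  · have harg : ∀ c : ℂ, (fun s : ℝ => c * v3 (x1 + (x2 + s)))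
        = fun s => c * v3 (s + (x1 + x2)) := by
      intro c; funext s; rw [show x1 + (x2 + s) = s + (x1 + x2) by ring]
    rw [harg, dhelp v3 hv3, show x3 + (x1 + x2) = x1 + (x2 + x3) by ring]
    exact case_core (exp_split (by rw [hφ]; push_cast; ring))
      (he3 (x1 + (x2 + x3)))
  · rw [dhelp vs1 hvs1]
    exact case_core' (exp_split' (by rw [hφ]; push_cast; ring))
      (hes1 (x1 + (x2 + x3)))
  · have harg : ∀ c : ℂ, (fun s : ℝ => c * vs2 (x1 + (s + x3)))
        = fun s => c * vs2 (s + (x1 + x3)) := by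
      intro c; funext s; rw [show x1 + (s + x3) = s + (x1 + x3) by ring]
    rw [harg, dhelp vs2 hvs2, show x2 + (x1 + x3) = x1 + (x2 + x3) by ring]
    exact case_core' (exp_split' (by rw [hφ]; push_cast; ring))
      (hes2 (x1 + (x2 + x3)))
  · have harg : ∀ c : ℂ, (fun s : ℝ => c * vs3 (x1 + (x2 + s)))
        = fun s => c * vs3 (s + (x1 + x2)) := by
      intro c; funext s; rw [show x1 + (x2 + s) = s + (x1 + x2) by ring]
    rw [harg, dhelp vs3 hvs3, show x3 + (x1 + x2) = x1 + (x2 + x3) by ring]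
    exact case_core' (exp_split' (by rw [hφ]; push_cast; ring))
      (hes3 (x1 + (x2 + x3)))
end

section
/- Let U ⊆ ℂ be open and connected with 0 ∉ U, let θ∞ ∈ ℂ, and let W1, W2, W3, W̃1, W̃2, W̃3 : U → ℂ be differentiable functions satisfying the system (P3-compatibility): t·W1′ = 2·W̃2·W̃3, t·W̃1′ = 2·W2·W3, t·W2′ = −2·W̃1·W̃3, t·W̃2′ = −2·W1·W3, t·W3′ = −2θ∞·W3 + 2t²·W̃1·W̃2, t·W̃3′ = 2θ∞·W̃3 + 2t²·W1·W2. Then the functions t ↦ W1·W̃1 + W2·W̃2 and t ↦ W1·W2·W3 − W̃1·W̃2·W̃3 + (θ∞/2)·(W1·W̃1 − W2·W̃2) have derivative zero at every point of U, and hence are constant on U. -/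
lemma const_of_deriv_zero {U : Set ℂ} (hU : IsOpen U) (hconn : IsPreconnected U)
    {f : ℂ → ℂ} (hdiff : ∀ t ∈ U, DifferentiableAt ℂ f t)
    (hder : ∀ t ∈ U, deriv f t = 0) :
    ∀ s ∈ U, ∀ t ∈ U, f s = f t := by
  -- f is locally constant on U
  have hloc : ∀ t ∈ U, ∀ᶠ y in nhds t, f y = f t := by
    intro t ht
    obtain ⟨ε, hε, hball⟩ := Metric.isOpen_iff.1 hU t ht
    filter_upwards [Metric.ball_mem_nhds t hε] with y hy
    have hfd0 : ∀ x ∈ Metric.ball t ε, fderivWithin ℂ f (Metric.ball t ε) x = 0 := by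
      intro x hx
      rw [fderivWithin_of_isOpen Metric.isOpen_ball hx]
      have h0 : HasDerivAt f 0 x := by
        have := (hdiff x (hball hx)).hasDerivAt
        rwa [hder x (hball hx)] at this
      rw [h0.hasFDerivAt.fderiv]
      ext
      simp
    exact (convex_ball t ε).is_const_of_fderivWithin_eq_zero
      (fun x hx => (hdiff x (hball hx)).differentiableWithinAt) hfd0 hy
      (Metric.mem_ball_self hε)
  intro s hs t ht
  haveI : PreconnectedSpace ↥U := isPreconnected_iff_preconnectedSpace.mp hconn
  have hlc : IsLocallyConstant (fun x : ↥U => f x.val) := by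
    rw [IsLocallyConstant.iff_eventually_eq]
    intro x
    exact (continuous_subtype_val.tendsto x).eventually (hloc x.val x.property)
  exact hlc.apply_eq_of_preconnectedSpace ⟨s, hs⟩ ⟨t, ht⟩

/-- First integrals of the system (P3-compatibility): the two indicated combinations
have zero derivative on U and are constant on the connected open set U. -/
theorem stmt_17
    (U : Set ℂ) (hU : IsOpen U) (hUconn : IsPreconnected U) (hU0 : (0 : ℂ) ∉ U)
    (thI : ℂ)
    (W1 W2 W3 Wt1 Wt2 Wt3 : ℂ → ℂ)
    (hd1 : ∀ t ∈ U, DifferentiableAt ℂ W1 t)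
    (hd2 : ∀ t ∈ U, DifferentiableAt ℂ W2 t)
    (hd3 : ∀ t ∈ U, DifferentiableAt ℂ W3 t)
    (hdt1 : ∀ t ∈ U, DifferentiableAt ℂ Wt1 t)
    (hdt2 : ∀ t ∈ U, DifferentiableAt ℂ Wt2 t)
    (hdt3 : ∀ t ∈ U, DifferentiableAt ℂ Wt3 t)
    (he1 : ∀ t ∈ U, t * deriv W1 t = 2 * (Wt2 t * Wt3 t))
    (he2 : ∀ t ∈ U, t * deriv Wt1 t = 2 * (W2 t * W3 t))
    (he3 : ∀ t ∈ U, t * deriv W2 t = -(2 * (Wt1 t * Wt3 t)))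
    (he4 : ∀ t ∈ U, t * deriv Wt2 t = -(2 * (W1 t * W3 t)))
    (he5 : ∀ t ∈ U, t * deriv W3 t = -(2 * thI) * W3 t + 2 * t ^ 2 * (Wt1 t * Wt2 t))
    (he6 : ∀ t ∈ U, t * deriv Wt3 t = 2 * thI * Wt3 t + 2 * t ^ 2 * (W1 t * W2 t)) :
    (∀ t ∈ U, deriv (fun s => W1 s * Wt1 s + W2 s * Wt2 s) t = 0) ∧
    (∀ t ∈ U, deriv (fun s => W1 s * W2 s * W3 s - Wt1 s * Wt2 s * Wt3 s
        + (thI / 2) * (W1 s * Wt1 s - W2 s * Wt2 s)) t = 0) ∧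
    (∀ s ∈ U, ∀ t ∈ U, W1 s * Wt1 s + W2 s * Wt2 s = W1 t * Wt1 t + W2 t * Wt2 t) ∧
    (∀ s ∈ U, ∀ t ∈ U,
      W1 s * W2 s * W3 s - Wt1 s * Wt2 s * Wt3 s
        + (thI / 2) * (W1 s * Wt1 s - W2 s * Wt2 s)
      = W1 t * W2 t * W3 t - Wt1 t * Wt2 t * Wt3 t
        + (thI / 2) * (W1 t * Wt1 t - W2 t * Wt2 t)) := by
  have hderiv1 : ∀ t ∈ U, deriv (fun s => W1 s * Wt1 s + W2 s * Wt2 s) t = 0 := by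
    intro t ht
    have ht0 : t ≠ 0 := fun h => hU0 (h ▸ ht)
    have H : HasDerivAt (fun s => W1 s * Wt1 s + W2 s * Wt2 s)
        (deriv W1 t * Wt1 t + W1 t * deriv Wt1 t + (deriv W2 t * Wt2 t + W2 t * deriv Wt2 t)) t :=
      (((hd1 t ht).hasDerivAt.mul (hdt1 t ht).hasDerivAt).add
        ((hd2 t ht).hasDerivAt.mul (hdt2 t ht).hasDerivAt))
    rw [H.deriv]
    have e1 := he1 t ht; have e2 := he2 t ht; have e3 := he3 t ht; have e4 := he4 t ht
    have key : t * (deriv W1 t * Wt1 t + W1 t * deriv Wt1 t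
        + (deriv W2 t * Wt2 t + W2 t * deriv Wt2 t)) = 0 := by
      linear_combination Wt1 t * e1 + W1 t * e2 + Wt2 t * e3 + W2 t * e4
    exact (mul_eq_zero.1 key).resolve_left ht0
  have hderiv2 : ∀ t ∈ U, deriv (fun s => W1 s * W2 s * W3 s - Wt1 s * Wt2 s * Wt3 s
      + (thI / 2) * (W1 s * Wt1 s - W2 s * Wt2 s)) t = 0 := by
    intro t ht
    have ht0 : t ≠ 0 := fun h => hU0 (h ▸ ht)
    have H : HasDerivAt (fun s => W1 s * W2 s * W3 s - Wt1 s * Wt2 s * Wt3 s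
        + (thI / 2) * (W1 s * Wt1 s - W2 s * Wt2 s))
        (((deriv W1 t * W2 t + W1 t * deriv W2 t) * W3 t + W1 t * W2 t * deriv W3 t
          - ((deriv Wt1 t * Wt2 t + Wt1 t * deriv Wt2 t) * Wt3 t + Wt1 t * Wt2 t * deriv Wt3 t))
          + (thI / 2) * (deriv W1 t * Wt1 t + W1 t * deriv Wt1 t
            - (deriv W2 t * Wt2 t + W2 t * deriv Wt2 t))) t := by
      have hA : HasDerivAt (fun s => W1 s * W2 s * W3 s)
          ((deriv W1 t * W2 t + W1 t * deriv W2 t) * W3 t + W1 t * W2 t * deriv W3 t) t :=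
        ((hd1 t ht).hasDerivAt.mul (hd2 t ht).hasDerivAt).mul (hd3 t ht).hasDerivAt
      have hB : HasDerivAt (fun s => Wt1 s * Wt2 s * Wt3 s)
          ((deriv Wt1 t * Wt2 t + Wt1 t * deriv Wt2 t) * Wt3 t + Wt1 t * Wt2 t * deriv Wt3 t) t :=
        ((hdt1 t ht).hasDerivAt.mul (hdt2 t ht).hasDerivAt).mul (hdt3 t ht).hasDerivAt
      have hC : HasDerivAt (fun s => (thI / 2) * (W1 s * Wt1 s - W2 s * Wt2 s))
          ((thI / 2) * (deriv W1 t * Wt1 t + W1 t * deriv Wt1 t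
            - (deriv W2 t * Wt2 t + W2 t * deriv Wt2 t))) t :=
        (((hd1 t ht).hasDerivAt.mul (hdt1 t ht).hasDerivAt).sub
          ((hd2 t ht).hasDerivAt.mul (hdt2 t ht).hasDerivAt)).const_mul (thI / 2)
      exact (hA.sub hB).add hC
    rw [H.deriv]
    have e1 := he1 t ht; have e2 := he2 t ht; have e3 := he3 t ht; have e4 := he4 t ht
    have e5 := he5 t ht; have e6 := he6 t ht
    have key : t * (((deriv W1 t * W2 t + W1 t * deriv W2 t) * W3 t + W1 t * W2 t * deriv W3 t
          - ((deriv Wt1 t * Wt2 t + Wt1 t * deriv Wt2 t) * Wt3 t + Wt1 t * Wt2 t * deriv Wt3 t))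
          + (thI / 2) * (deriv W1 t * Wt1 t + W1 t * deriv Wt1 t
            - (deriv W2 t * Wt2 t + W2 t * deriv Wt2 t))) = 0 := by
      linear_combination (W2 t * W3 t + (thI / 2) * Wt1 t) * e1
        + (W1 t * W3 t - (thI / 2) * Wt2 t) * e3
        + (W1 t * W2 t) * e5
        + (-(Wt2 t * Wt3 t) + (thI / 2) * W1 t) * e2
        + (-(Wt1 t * Wt3 t) - (thI / 2) * W2 t) * e4
        + (-(Wt1 t * Wt2 t)) * e6
    exact (mul_eq_zero.1 key).resolve_left ht0
  refine ⟨hderiv1, hderiv2, ?_, ?_⟩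
  · exact const_of_deriv_zero hU hUconn
      (fun t ht => (((hd1 t ht).mul (hdt1 t ht)).add ((hd2 t ht).mul (hdt2 t ht)))) hderiv1
  · exact const_of_deriv_zero hU hUconn
      (fun t ht => ((((hd1 t ht).mul (hd2 t ht)).mul (hd3 t ht)).sub
          (((hdt1 t ht).mul (hdt2 t ht)).mul (hdt3 t ht))).add
        ((differentiableAt_const _).mul (((hd1 t ht).mul (hdt1 t ht)).sub
          ((hd2 t ht).mul (hdt2 t ht))))) hderiv2
end

section
/- Let U ⊆ ℂ be open with 0 ∉ U, let θ0, θ∞, c1 ∈ ℂ, and let W1, W2, W3, W̃1, W̃2, W̃3 : U → ℂ be differentiable functions satisfying system (P3-compatibility): t·W1′ = 2·W̃2·W̃3, t·W̃1′ = 2·W2·W3, t·W2′ = −2·W̃1·W̃3, t·W̃2′ = −2·W1·W3, t·W3′ = −2θ∞·W3 + 2t²·W̃1·W̃2, t·W̃3′ = 2θ∞·W̃3 + 2t²·W1·W2, together with the first-integral relations W1·W̃1 + W2·W̃2 = c1 and W1·W2·W3 − W̃1·W̃2·W̃3 + (θ∞/2)·(W1·W̃1 − W2·W̃2) = θ0/2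 identically on U. Assume W1, W2, and W̃3 are nonvanishing on U. Then the function y(t) := W̃3(t)/(t·W1(t)·W2(t)) is twice differentiable and satisfies the third Painlevé equation P3: y″ = (1/y)·(y′)² − y′/t + (α·y² + β)/t + γ·y³ + δ/y, with parameters α = 4θ0, β = 4(1 − θ∞), γ = 4c1², δ = −4. -/
set_option maxHeartbeats 2000000 in


/-- From solutions of (P3-compatibility) with the first-integral normalizations,
the function y = W̃3/(t·W1·W2) solves the third Painlevé equation with
α = 4θ0, β = 4(1 − θ∞), γ = 4c1², δ = −4. -/
theorem stmt_18
    (U : Set ℂ) (hU : IsOpen U) (hU0 : (0 : ℂ) ∉ U)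
    (th0 thI c1 : ℂ)
    (W1 W2 W3 Wt1 Wt2 Wt3 : ℂ → ℂ)
    (hd1 : ∀ t ∈ U, DifferentiableAt ℂ W1 t)
    (hd2 : ∀ t ∈ U, DifferentiableAt ℂ W2 t)
    (hd3 : ∀ t ∈ U, DifferentiableAt ℂ W3 t)
    (hdt1 : ∀ t ∈ U, DifferentiableAt ℂ Wt1 t)
    (hdt2 : ∀ t ∈ U, DifferentiableAt ℂ Wt2 t)
    (hdt3 : ∀ t ∈ U, DifferentiableAt ℂ Wt3 t)
    (he1 : ∀ t ∈ U, t * deriv W1 t = 2 * (Wt2 t * Wt3 t))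
    (he2 : ∀ t ∈ U, t * deriv Wt1 t = 2 * (W2 t * W3 t))
    (he3 : ∀ t ∈ U, t * deriv W2 t = -(2 * (Wt1 t * Wt3 t)))
    (he4 : ∀ t ∈ U, t * deriv Wt2 t = -(2 * (W1 t * W3 t)))
    (he5 : ∀ t ∈ U, t * deriv W3 t = -(2 * thI) * W3 t + 2 * t ^ 2 * (Wt1 t * Wt2 t))
    (he6 : ∀ t ∈ U, t * deriv Wt3 t = 2 * thI * Wt3 t + 2 * t ^ 2 * (W1 t * W2 t))
    (hint1 : ∀ t ∈ U, W1 t * Wt1 t + W2 t * Wt2 t = c1)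
    (hint2 : ∀ t ∈ U, W1 t * W2 t * W3 t - Wt1 t * Wt2 t * Wt3 t
        + (thI / 2) * (W1 t * Wt1 t - W2 t * Wt2 t) = th0 / 2)
    (hn1 : ∀ t ∈ U, W1 t ≠ 0) (hn2 : ∀ t ∈ U, W2 t ≠ 0) (hn3 : ∀ t ∈ U, Wt3 t ≠ 0)
    (y : ℂ → ℂ)
    (hy : y = fun t => Wt3 t / (t * W1 t * W2 t)) :
    ∀ t ∈ U,
      DifferentiableAt ℂ y t ∧ DifferentiableAt ℂ (deriv y) t ∧
      deriv (deriv y) t =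
        (1 / y t) * (deriv y t) ^ 2 - deriv y t / t
        + (4 * th0 * (y t) ^ 2 + 4 * (1 - thI)) / t
        + 4 * c1 ^ 2 * (y t) ^ 3 + (-4 : ℂ) / y t := by
  have hne : ∀ s ∈ U, (s : ℂ) ≠ 0 := fun s hs h => hU0 (h ▸ hs)
  -- derivative formula for y on U
  have key : ∀ s ∈ U, HasDerivAt y
      (2 + (2 * thI - 1) * (Wt3 s / (s * W1 s * W2 s)) / s
        + 2 * (W1 s * Wt1 s - W2 s * Wt2 s) * (Wt3 s / (s * W1 s * W2 s)) ^ 2) s := by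
    intro s hs
    have hs0 := hne s hs
    have ha := hn1 s hs
    have hb := hn2 s hs
    have hden_ne : s * W1 s * W2 s ≠ 0 := mul_ne_zero (mul_ne_zero hs0 ha) hb
    have h1 := (hd1 s hs).hasDerivAt
    have h2 := (hd2 s hs).hasDerivAt
    have h3 := (hdt3 s hs).hasDerivAt
    have hden : HasDerivAt (fun x => x * W1 x * W2 x)
        ((1 * W1 s + s * deriv W1 s) * W2 s + s * W1 s * deriv W2 s) s :=
      ((hasDerivAt_id s).mul h1).mul h2
    have hdiv := h3.div hden hden_ne
    rw [hy]
    refine HasDerivAt.congr_deriv hdiv ?_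
    have e1 : deriv W1 s = 2 * (Wt2 s * Wt3 s) / s := by
      rw [eq_div_iff hs0, mul_comm]; exact he1 s hs
    have e2 : deriv W2 s = -(2 * (Wt1 s * Wt3 s)) / s := by
      rw [eq_div_iff hs0, mul_comm]; exact he3 s hs
    have e3 : deriv Wt3 s = (2 * thI * Wt3 s + 2 * s ^ 2 * (W1 s * W2 s)) / s := by
      rw [eq_div_iff hs0, mul_comm]; exact he6 s hs
    rw [e1, e2, e3]
    field_simp
    ring
  intro t ht
  have ht0 := hne t ht
  have ha := hn1 t ht
  have hb := hn2 t ht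
  have hC := hn3 t ht
  have hYd : HasDerivAt (fun s => Wt3 s / (s * W1 s * W2 s))
      (2 + (2 * thI - 1) * (Wt3 t / (t * W1 t * W2 t)) / t
        + 2 * (W1 t * Wt1 t - W2 t * Wt2 t) * (Wt3 t / (t * W1 t * W2 t)) ^ 2) t :=
    hy ▸ key t ht
  have h1 := (hd1 t ht).hasDerivAt
  have h2 := (hd2 t ht).hasDerivAt
  have hA := (hdt1 t ht).hasDerivAt
  have hB := (hdt2 t ht).hasDerivAt
  have hS : HasDerivAt (fun s => W1 s * Wt1 s - W2 s * Wt2 s)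
      (deriv W1 t * Wt1 t + W1 t * deriv Wt1 t - (deriv W2 t * Wt2 t + W2 t * deriv Wt2 t)) t :=
    (h1.mul hA).sub (h2.mul hB)
  have hFd := ((hasDerivAt_const t (2:ℂ)).add
      ((hYd.const_mul (2 * thI - 1)).div (hasDerivAt_id' t) ht0)).add
      ((hS.const_mul 2).mul (hYd.pow 2))
  have hEq : Set.EqOn (deriv y)
      (fun s => 2 + (2 * thI - 1) * (Wt3 s / (s * W1 s * W2 s)) / s
        + 2 * (W1 s * Wt1 s - W2 s * Wt2 s) * (Wt3 s / (s * W1 s * W2 s)) ^ 2) U :=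
    fun s hs => (key s hs).deriv
  have hev : deriv y =ᶠ[nhds t]
      (fun s => 2 + (2 * thI - 1) * (Wt3 s / (s * W1 s * W2 s)) / s
        + 2 * (W1 s * Wt1 s - W2 s * Wt2 s) * (Wt3 s / (s * W1 s * W2 s)) ^ 2) :=
    Filter.eventuallyEq_of_mem (hU.mem_nhds ht) hEq
  refine ⟨(key t ht).differentiableAt, hev.differentiableAt_iff.mpr hFd.differentiableAt, ?_⟩
  have hyt : y t = Wt3 t / (t * W1 t * W2 t) := by rw [hy]
  rw [hev.deriv_eq, (show deriv (fun s => 2 + (2 * thI - 1) * (Wt3 s / (s * W1 s * W2 s)) / s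
        + 2 * (W1 s * Wt1 s - W2 s * Wt2 s) * (Wt3 s / (s * W1 s * W2 s)) ^ 2) t = _ from hFd.deriv), (key t ht).deriv, hyt]
  have e1 : deriv W1 t = 2 * (Wt2 t * Wt3 t) / t := by
    rw [eq_div_iff ht0, mul_comm]; exact he1 t ht
  have e2 : deriv W2 t = -(2 * (Wt1 t * Wt3 t)) / t := by
    rw [eq_div_iff ht0, mul_comm]; exact he3 t ht
  have eA : deriv Wt1 t = 2 * (W2 t * W3 t) / t := by
    rw [eq_div_iff ht0, mul_comm]; exact he2 t ht
  have eB : deriv Wt2 t = -(2 * (W1 t * W3 t)) / t := by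
    rw [eq_div_iff ht0, mul_comm]; exact he4 t ht
  have hth : th0 = 2 * (W1 t * W2 t * W3 t - Wt1 t * Wt2 t * Wt3 t)
      + thI * (W1 t * Wt1 t - W2 t * Wt2 t) := by
    linear_combination (-2 : ℂ) * hint2 t ht
  rw [e1, e2, eA, eB, hth, ← hint1 t ht]
  have hden_ne : t * W1 t * W2 t ≠ 0 := mul_ne_zero (mul_ne_zero ht0 ha) hb
  set v := Wt3 t / (t * W1 t * W2 t) with hv
  have hv0 : v ≠ 0 := div_ne_zero hC hden_ne
  have hveq : Wt3 t = v * (t * W1 t * W2 t) := (div_mul_cancel₀ (Wt3 t) hden_ne).symm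
  clear_value v
  rw [hveq]
  field_simp [ht0, ha, hb, hv0]
  simp only [Pi.pow_apply, hveq, Nat.cast_ofNat, show (2:ℕ) - 1 = 1 from rfl, pow_one]
  field_simp
  ring
end

section
/- Let U ⊆ ℂ be open and connected with 0 ∉ U, and suppose the map t ↦ t² is injective on U; set V := {t² : t ∈ U}. Let θ0, θ∞ ∈ ℂ and c1 ∈ ℂ with c1 ≠ 0, and let z : U → ℂ be twice differentiable with z(t) ≠ 0 and c1·t − z(t) ≠ 0 for all t ∈ U, satisfying the equation (eq:z-P3): z″ = ((c1·t − 2z)/(2z·(c1·t − z)))·(z′)² + (z/(t·(c1·t − z)))·z′ + 8z·(c1·t − z)/t + (c1 + 4θ0θ∞)/(2t) + ((θ0 − c1θ∞)² − c1²)/(2(c1·t − z)) − (θ0 + c1θ∞)²/(2z). Define y : V → ℂ by y(t²) := z(t)/(z(t) − c1·t) for t ∈ U. Then y is twice differentiable on V and satisfies the fifth Painlevé equation P5 in the variable τ ∈ V with parameters α = (θ0 − c1θ∞)²/(8c1²), β = −(θ0 + c1θ∞)²/(8c1²), γ = 2c1, δ = 0. -/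
set_option maxHeartbeats 1000000


lemma alg2 (t Z Z1 th0 thI c1 : ℂ) (ht : t ≠ 0) (hZ : Z ≠ 0)
    (hA : Z - c1 * t ≠ 0) (hA' : c1 * t - Z ≠ 0) :
    (c1*t - 2*Z)/(2*Z*(c1*t-Z))*Z1^2 + Z/(t*(c1*t-Z))*Z1 + 8*Z*(c1*t-Z)/t
      + (c1+4*th0*thI)/(2*t) + ((th0-c1*thI)^2-c1^2)/(2*(c1*t-Z)) - (th0+c1*thI)^2/(2*Z)
    = (-(t*(c1*t - 2*Z)*Z1^2) - 2*Z^2*Z1 - 16*Z^2*(Z-c1*t)^2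
        + (c1+4*th0*thI)*Z*(Z-c1*t) - t*Z*((th0-c1*thI)^2-c1^2) - t*(Z-c1*t)*(th0+c1*thI)^2)
      / (2*t*Z*(Z-c1*t)) := by
  have hD2 : 2*t*Z*(Z-c1*t) ≠ 0 :=
    mul_ne_zero (mul_ne_zero (mul_ne_zero two_ne_zero ht) hZ) hA
  have hb1 : 2*Z*(c1*t-Z) ≠ 0 := mul_ne_zero (mul_ne_zero two_ne_zero hZ) hA'
  have hb2 : t*(c1*t-Z) ≠ 0 := mul_ne_zero ht hA'
  have hb4 : (2:ℂ)*t ≠ 0 := mul_ne_zero two_ne_zero ht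
  have hb5 : 2*(c1*t-Z) ≠ 0 := mul_ne_zero two_ne_zero hA'
  have hb6 : 2*Z ≠ 0 := mul_ne_zero two_ne_zero hZ
  rw [div_mul_eq_mul_div, div_mul_eq_mul_div]
  rw [show (c1*t - 2*Z)*Z1^2/(2*Z*(c1*t-Z)) = (-(t*(c1*t - 2*Z)*Z1^2))/(2*t*Z*(Z-c1*t)) from by
    rw [div_eq_div_iff hb1 hD2]; ring]
  rw [show Z*Z1/(t*(c1*t-Z)) = (-(2*Z^2*Z1))/(2*t*Z*(Z-c1*t)) from by
    rw [div_eq_div_iff hb2 hD2]; ring]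
  rw [show 8*Z*(c1*t-Z)/t = (-(16*Z^2*(Z-c1*t)^2))/(2*t*Z*(Z-c1*t)) from by
    rw [div_eq_div_iff ht hD2]; ring]
  rw [show (c1+4*th0*thI)/(2*t) = ((c1+4*th0*thI)*Z*(Z-c1*t))/(2*t*Z*(Z-c1*t)) from by
    rw [div_eq_div_iff hb4 hD2]; ring]
  rw [show ((th0-c1*thI)^2-c1^2)/(2*(c1*t-Z)) = (-(t*Z*((th0-c1*thI)^2-c1^2)))/(2*t*Z*(Z-c1*t)) from by
    rw [div_eq_div_iff hb5 hD2]; ring]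
  rw [show (th0+c1*thI)^2/(2*Z) = (t*(Z-c1*t)*(th0+c1*thI)^2)/(2*t*Z*(Z-c1*t)) from by
    rw [div_eq_div_iff hb6 hD2]; ring]
  rw [← add_div, ← add_div, ← add_div, ← add_div, div_sub_div_same]
  rw [div_eq_div_iff hD2 hD2]
  ring

lemma alg (t Z Z1 Z2 th0 thI c1 : ℂ) (ht : t ≠ 0) (hZ : Z ≠ 0) (hc1 : c1 ≠ 0)
    (hA : Z - c1 * t ≠ 0)
    (hZ2 : Z2 = (-(t*(c1*t - 2*Z)*Z1^2) - 2*Z^2*Z1 - 16*Z^2*(Z-c1*t)^2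
        + (c1+4*th0*thI)*Z*(Z-c1*t) - t*Z*((th0-c1*thI)^2-c1^2) - t*(Z-c1*t)*(th0+c1*thI)^2)
      / (2*t*Z*(Z-c1*t))) :
    ((c1*(Z1 - (1*Z1 + t*Z2))*((Z-c1*t)^2*(2*t))
        - c1*(Z - t*Z1)*(((2:ℕ):ℂ)*(Z-c1*t)^1*(Z1-c1*1)*(2*t) + (Z-c1*t)^2*2))
      / ((Z-c1*t)^2*(2*t))^2) * (1/(2*t))
    = (1/(2*(Z/(Z-c1*t))) + 1/(Z/(Z-c1*t) - 1)) * (c1*(Z - t*Z1)/((Z-c1*t)^2*(2*t)))^2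
      - (c1*(Z-t*Z1)/((Z-c1*t)^2*(2*t)))/(t^2)
      + ((Z/(Z-c1*t)-1)^2/(t^2)^2)
        * ((th0-c1*thI)^2/(8*c1^2)*(Z/(Z-c1*t)) + (-((th0+c1*thI)^2/(8*c1^2)))/(Z/(Z-c1*t)))
      + 2*c1*(Z/(Z-c1*t))/(t^2)
      + 0*(Z/(Z-c1*t))*((Z/(Z-c1*t))+1)/((Z/(Z-c1*t))-1) := by
  set P2 : ℂ := -(t*(c1*t - 2*Z)*Z1^2) - 2*Z^2*Z1 - 16*Z^2*(Z-c1*t)^2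
        + (c1+4*th0*thI)*Z*(Z-c1*t) - t*Z*((th0-c1*thI)^2-c1^2) - t*(Z-c1*t)*(th0+c1*thI)^2
    with hP2
  have hct : c1 * t ≠ 0 := mul_ne_zero hc1 ht
  have hD : (64:ℂ)*c1^2*t^5*Z*(Z-c1*t)^5 ≠ 0 := by
    refine mul_ne_zero (mul_ne_zero (mul_ne_zero (mul_ne_zero ?_ (pow_ne_zero _ hc1))
      (pow_ne_zero _ ht)) hZ) (pow_ne_zero _ hA)
    norm_num
  have h1 : Z / (Z - c1 * t) - 1 = c1 * t / (Z - c1 * t) := by field_simp; ring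
  rw [h1]
  have e1 : 1 / (2 * (Z / (Z - c1 * t))) = (Z - c1 * t) / (2 * Z) := by
    rw [one_div, mul_inv, inv_div]
    field_simp
  have e2 : 1 / (c1 * t / (Z - c1 * t)) = (Z - c1 * t) / (c1 * t) := one_div_div _ _
  have e3 : (-((th0 + c1 * thI) ^ 2 / (8 * c1 ^ 2))) / (Z / (Z - c1 * t))
      = -((th0 + c1 * thI) ^ 2 * (Z - c1 * t)) / (8 * c1 ^ 2 * Z) := by
    rw [div_div_eq_mul_div]
    field_simp
  have e4 : 0*(Z/(Z-c1*t))*((Z/(Z-c1*t))+1)/(c1*t/(Z-c1*t)) = 0 := by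
    rw [zero_mul, zero_mul, zero_div]
  rw [e1, e2, e3, e4]
  have i1 : Z1 - (1*Z1 + t*(P2/(2*t*Z*(Z-c1*t)))) = -(P2/(2*Z*(Z-c1*t))) := by
    field_simp
    ring
  have i2 : c1*(-(P2/(2*Z*(Z-c1*t))))*((Z-c1*t)^2*(2*t)) = -(c1*P2*(Z-c1*t)*t)/Z := by
    field_simp
  have i3 : -(c1*P2*(Z-c1*t)*t)/Z
        - c1*(Z - t*Z1)*(((2:ℕ):ℂ)*(Z-c1*t)^1*(Z1-c1*1)*(2*t) + (Z-c1*t)^2*2)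
      = (-(c1*t*P2*(Z-c1*t))
          - Z*(c1*(Z - t*Z1)*(2*(Z-c1*t)*(Z1-c1)*(2*t)+(Z-c1*t)^2*2)))/Z := by
    field_simp
    ring
  have cL : ((c1*(Z1 - (1*Z1 + t*(P2/(2*t*Z*(Z-c1*t)))))*((Z-c1*t)^2*(2*t))
        - c1*(Z - t*Z1)*(((2:ℕ):ℂ)*(Z-c1*t)^1*(Z1-c1*1)*(2*t) + (Z-c1*t)^2*2))
      / ((Z-c1*t)^2*(2*t))^2) * (1/(2*t))
      = (-(c1*t*P2*(Z-c1*t)) - Z*(c1*(Z - t*Z1)*(2*(Z-c1*t)*(Z1-c1)*(2*t)+(Z-c1*t)^2*2)))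
        / (Z*((Z-c1*t)^2*(2*t))^2*(2*t)) := by
    rw [i1, i2, i3, div_div, mul_one_div, div_div]
  have cT1 : ((Z-c1*t)/(2*Z) + (Z-c1*t)/(c1*t)) * (c1*(Z - t*Z1)/((Z-c1*t)^2*(2*t)))^2
      = ((Z-c1*t)*(c1*t+2*Z)*(c1*(Z-t*Z1))^2) / (2*Z*(c1*t)*((Z-c1*t)^2*(2*t))^2) := by
    have k1 : (Z-c1*t)/(2*Z) + (Z-c1*t)/(c1*t) = ((Z-c1*t)*(c1*t+2*Z))/(2*Z*(c1*t)) := by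
      rw [div_add_div _ _ (mul_ne_zero two_ne_zero hZ) hct]
      rw [div_eq_div_iff (mul_ne_zero (mul_ne_zero two_ne_zero hZ) hct)
        (mul_ne_zero (mul_ne_zero two_ne_zero hZ) hct)]
      ring
    rw [k1, div_pow, div_mul_div_comm]
  have cT2 : (c1*(Z-t*Z1)/((Z-c1*t)^2*(2*t)))/(t^2)
      = c1*(Z-t*Z1) / ((Z-c1*t)^2*(2*t)*t^2) := by
    rw [div_div]
  have j1 : (th0-c1*thI)^2/(8*c1^2)*(Z/(Z-c1*t))
        + -((th0 + c1 * thI) ^ 2 * (Z - c1 * t)) / (8 * c1 ^ 2 * Z)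
      = ((th0-c1*thI)^2*Z*Z - (th0+c1*thI)^2*(Z-c1*t)*(Z-c1*t))/(8*c1^2*(Z-c1*t)*Z) := by
    rw [div_mul_div_comm, div_add_div _ _
      (mul_ne_zero (mul_ne_zero (by norm_num : (8:ℂ) ≠ 0) (pow_ne_zero _ hc1)) hA)
      (mul_ne_zero (mul_ne_zero (by norm_num : (8:ℂ) ≠ 0) (pow_ne_zero _ hc1)) hZ)]
    rw [div_eq_div_iff (by
        exact mul_ne_zero (mul_ne_zero (mul_ne_zero (by norm_num) (pow_ne_zero _ hc1)) hA)
          (mul_ne_zero (mul_ne_zero (by norm_num) (pow_ne_zero _ hc1)) hZ))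
      (mul_ne_zero (mul_ne_zero (mul_ne_zero (by norm_num : (8:ℂ) ≠ 0) (pow_ne_zero _ hc1)) hA) hZ)]
    ring
  have cT3 : ((c1*t/(Z-c1*t))^2/(t^2)^2)
        * ((th0-c1*thI)^2/(8*c1^2)*(Z/(Z-c1*t))
          + -((th0 + c1 * thI) ^ 2 * (Z - c1 * t)) / (8 * c1 ^ 2 * Z))
      = ((c1*t)^2*((th0-c1*thI)^2*Z*Z - (th0+c1*thI)^2*(Z-c1*t)*(Z-c1*t)))
        / ((Z-c1*t)^2*(t^2)^2*(8*c1^2*(Z-c1*t)*Z)) := by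
    rw [j1, div_pow, div_div, div_mul_div_comm]
  have cT4 : 2*c1*(Z/(Z-c1*t))/(t^2) = 2*c1*Z / ((Z-c1*t)*t^2) := by
    field_simp
  rw [hZ2, cL, cT1, cT2, cT3, cT4]
  have hQL : Z*((Z-c1*t)^2*(2*t))^2*(2*t) ≠ 0 := by
    refine mul_ne_zero (mul_ne_zero hZ (pow_ne_zero _ (mul_ne_zero (pow_ne_zero _ hA)
      (mul_ne_zero two_ne_zero ht)))) (mul_ne_zero two_ne_zero ht)
  have hQ1 : 2*Z*(c1*t)*((Z-c1*t)^2*(2*t))^2 ≠ 0 := by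
    refine mul_ne_zero (mul_ne_zero (mul_ne_zero two_ne_zero hZ) hct)
      (pow_ne_zero _ (mul_ne_zero (pow_ne_zero _ hA) (mul_ne_zero two_ne_zero ht)))
  have hQ2 : (Z-c1*t)^2*(2*t)*t^2 ≠ 0 := by
    refine mul_ne_zero (mul_ne_zero (pow_ne_zero _ hA) (mul_ne_zero two_ne_zero ht))
      (pow_ne_zero _ ht)
  have hQ3 : (Z-c1*t)^2*(t^2)^2*(8*c1^2*(Z-c1*t)*Z) ≠ 0 := by
    refine mul_ne_zero (mul_ne_zero (pow_ne_zero _ hA) (pow_ne_zero _ (pow_ne_zero _ ht)))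
      (mul_ne_zero (mul_ne_zero (mul_ne_zero (by norm_num) (pow_ne_zero _ hc1)) hA) hZ)
  have hQ4 : (Z-c1*t)*t^2 ≠ 0 := mul_ne_zero hA (pow_ne_zero _ ht)
  rw [show (-(c1*t*P2*(Z-c1*t)) - Z*(c1*(Z - t*Z1)*(2*(Z-c1*t)*(Z1-c1)*(2*t)+(Z-c1*t)^2*2)))
        / (Z*((Z-c1*t)^2*(2*t))^2*(2*t))
      = ((-(c1*t*P2*(Z-c1*t)) - Z*(c1*(Z - t*Z1)*(2*(Z-c1*t)*(Z1-c1)*(2*t)+(Z-c1*t)^2*2)))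
          *(8*c1^2*t^2*(Z-c1*t))) / (64*c1^2*t^5*Z*(Z-c1*t)^5) from by
    rw [div_eq_div_iff hQL hD]; ring]
  rw [show ((Z-c1*t)*(c1*t+2*Z)*(c1*(Z-t*Z1))^2) / (2*Z*(c1*t)*((Z-c1*t)^2*(2*t))^2)
      = (((Z-c1*t)*(c1*t+2*Z)*(c1*(Z-t*Z1))^2)*(8*c1*t^2*(Z-c1*t)))
        / (64*c1^2*t^5*Z*(Z-c1*t)^5) from by
    rw [div_eq_div_iff hQ1 hD]; ring]
  rw [show c1*(Z-t*Z1) / ((Z-c1*t)^2*(2*t)*t^2)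
      = ((c1*(Z-t*Z1))*(32*c1^2*t^2*Z*(Z-c1*t)^3)) / (64*c1^2*t^5*Z*(Z-c1*t)^5) from by
    rw [div_eq_div_iff hQ2 hD]; ring]
  rw [show ((c1*t)^2*((th0-c1*thI)^2*Z*Z - (th0+c1*thI)^2*(Z-c1*t)*(Z-c1*t)))
        / ((Z-c1*t)^2*(t^2)^2*(8*c1^2*(Z-c1*t)*Z))
      = (((c1*t)^2*((th0-c1*thI)^2*Z*Z - (th0+c1*thI)^2*(Z-c1*t)*(Z-c1*t)))*(8*t*(Z-c1*t)^2))
        / (64*c1^2*t^5*Z*(Z-c1*t)^5) from by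
    rw [div_eq_div_iff hQ3 hD]; ring]
  rw [show 2*c1*Z / ((Z-c1*t)*t^2)
      = ((2*c1*Z)*(64*c1^2*t^3*Z*(Z-c1*t)^4)) / (64*c1^2*t^5*Z*(Z-c1*t)^5) from by
    rw [div_eq_div_iff hQ4 hD]; ring]
  rw [add_zero, div_sub_div_same, ← add_div, ← add_div]
  rw [div_eq_div_iff hD hD]
  ring

/-- The change of variables τ = t², y(t²) = z(t)/(z(t) − c1·t) maps solutions of
(eq:z-P3) to solutions of the degenerate fifth Painlevé equation (δ = 0). -/
theorem stmt_19
    (U : Set ℂ) (hU : IsOpen U) (hUconn : IsPreconnected U) (hU0 : (0 : ℂ) ∉ U)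
    (hinj : Set.InjOn (fun t : ℂ => t ^ 2) U)
    (th0 thI c1 : ℂ) (hc1 : c1 ≠ 0)
    (z : ℂ → ℂ)
    (hz1 : ∀ t ∈ U, DifferentiableAt ℂ z t)
    (hz2 : ∀ t ∈ U, DifferentiableAt ℂ (deriv z) t)
    (hzne : ∀ t ∈ U, z t ≠ 0)
    (hzne2 : ∀ t ∈ U, c1 * t - z t ≠ 0)
    (hzeq : ∀ t ∈ U, deriv (deriv z) t =
      ((c1 * t - 2 * z t) / (2 * z t * (c1 * t - z t))) * (deriv z t) ^ 2
      + (z t / (t * (c1 * t - z t))) * deriv z t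
      + 8 * z t * (c1 * t - z t) / t
      + (c1 + 4 * th0 * thI) / (2 * t)
      + ((th0 - c1 * thI) ^ 2 - c1 ^ 2) / (2 * (c1 * t - z t))
      - (th0 + c1 * thI) ^ 2 / (2 * z t))
    (y : ℂ → ℂ)
    (hy : ∀ t ∈ U, y (t ^ 2) = z t / (z t - c1 * t)) :
    ∀ τ ∈ (fun t : ℂ => t ^ 2) '' U,
      DifferentiableAt ℂ y τ ∧ DifferentiableAt ℂ (deriv y) τ ∧
      deriv (deriv y) τ =
        (1 / (2 * y τ) + 1 / (y τ - 1)) * (deriv y τ) ^ 2 - deriv y τ / τ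
        + ((y τ - 1) ^ 2 / τ ^ 2)
          * (((th0 - c1 * thI) ^ 2 / (8 * c1 ^ 2)) * y τ
            + (-((th0 + c1 * thI) ^ 2 / (8 * c1 ^ 2))) / y τ)
        + (2 * c1) * y τ / τ
        + (0 : ℂ) * y τ * (y τ + 1) / (y τ - 1) := by
  rintro τ ⟨t, htU, rfl⟩
  simp only
  have ht0 : t ≠ 0 := fun h => hU0 (h ▸ htU)
  have ht20 : (t : ℂ) ^ 2 ≠ 0 := pow_ne_zero 2 ht0
  -- local branch of square root sending t² to t
  set s : ℂ → ℂ := fun σ => t * Complex.exp (Complex.log (σ / t ^ 2) / 2) with hs_def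
  have hst : s (t ^ 2) = t := by
    simp [hs_def, div_self ht20, Complex.log_one]
  -- basic eventual properties of s
  have hslit : ∀ᶠ σ in nhds (t ^ 2), σ / t ^ 2 ∈ Complex.slitPlane := by
    have hc : ContinuousAt (fun σ : ℂ => σ / t ^ 2) (t ^ 2) :=
      (continuous_id.div_const _).continuousAt
    have h1 : ((t : ℂ) ^ 2) / t ^ 2 ∈ Complex.slitPlane := by
      rw [div_self ht20]; exact Complex.one_mem_slitPlane
    exact hc.eventually_mem (Complex.isOpen_slitPlane.mem_nhds h1)
  have hsd : ∀ᶠ σ in nhds (t ^ 2),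
      HasDerivAt s (1 / (2 * s σ)) σ ∧ s σ ^ 2 = σ := by
    filter_upwards [hslit] with σ hσ
    have hw0 : σ / t ^ 2 ≠ 0 := Complex.slitPlane_ne_zero hσ
    have hσ0 : σ ≠ 0 := fun h => hw0 (by simp [h])
    have h2 : s σ ^ 2 = σ := by
      have he : Complex.exp (Complex.log (σ / t ^ 2) / 2) ^ 2 = σ / t ^ 2 := by
        rw [sq, ← Complex.exp_add, add_halves, Complex.exp_log hw0]
      simp only [hs_def]
      rw [mul_pow, he]
      field_simp
    have hs0 : s σ ≠ 0 := by
      intro h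
      rw [h] at h2
      exact hσ0 (by simpa using h2.symm)
    refine ⟨?_, h2⟩
    have hdiv : HasDerivAt (fun x : ℂ => x / t ^ 2) (1 / t ^ 2) σ := by
      simpa using (hasDerivAt_id σ).div_const (t ^ 2)
    have hlog : HasDerivAt (fun x : ℂ => Complex.log (x / t ^ 2))
        ((σ / t ^ 2)⁻¹ * (1 / t ^ 2)) σ :=
      by simpa only [div_eq_inv_mul] using hdiv.clog hσ
    have hexp := (Complex.hasDerivAt_exp _).comp σ (hlog.div_const 2)
    have hfin := hexp.const_mul t
    refine hfin.congr_deriv (Eq.symm ?_)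
    have hρ : (σ / t ^ 2)⁻¹ * (1 / t ^ 2) = σ⁻¹ := by field_simp
    rw [hρ]
    have hss : s σ * s σ = σ := by rw [← sq]; exact h2
    rw [show t * (Complex.exp (Complex.log (σ / t ^ 2) / 2) * (σ⁻¹ / 2))
        = s σ * σ⁻¹ / 2 from by simp only [hs_def]; ring]
    have key : ∀ u : ℂ, u ≠ 0 → u * u = σ → (1 : ℂ) / (2 * u) = u * σ⁻¹ / 2 := by
      intro u hu huu
      rw [← huu, mul_inv]
      field_simp
    exact key (s σ) hs0 hss
  have hsU : ∀ᶠ σ in nhds (t ^ 2), s σ ∈ U := by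
    have hsc : ContinuousAt s (t ^ 2) := (hsd.self_of_nhds.1).continuousAt
    have hmem : U ∈ nhds (s (t ^ 2)) := by rw [hst]; exact hU.mem_nhds htU
    exact hsc.eventually_mem hmem
  -- y agrees with z(s σ)/(z(s σ) − c1 s σ) near t²
  have hyw : ∀ᶠ σ in nhds (t ^ 2), y σ = z (s σ) / (z (s σ) - c1 * s σ) := by
    filter_upwards [hsd, hsU] with σ h hU'
    have := hy (s σ) hU'
    rwa [h.2] at this
  -- the first derivative of y near t²
  set w1 : ℂ → ℂ := fun u =>
    c1 * (z u - u * deriv z u) / ((z u - c1 * u) ^ 2 * (2 * u)) with hw1_def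
  have hED : ∀ᶠ σ in nhds (t ^ 2), HasDerivAt y (w1 (s σ)) σ := by
    filter_upwards [hsd, hsU, hyw.eventually_nhds] with σ h hU' hyloc
    obtain ⟨hds, h2⟩ := h
    have hu0 : s σ ≠ 0 := fun h => hU0 (h ▸ hU')
    have hden : z (s σ) - c1 * s σ ≠ 0 := by
      have := hzne2 (s σ) hU'
      intro h; apply this; linear_combination -h
    have hg : HasDerivAt (fun v => z v / (z v - c1 * v))
        ((deriv z (s σ) * (z (s σ) - c1 * s σ)
          - z (s σ) * (deriv z (s σ) - c1 * 1)) / (z (s σ) - c1 * s σ) ^ 2) (s σ) :=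
      ((hz1 _ hU').hasDerivAt).div
        (((hz1 _ hU').hasDerivAt).sub ((hasDerivAt_id (s σ)).const_mul c1)) hden
    have hcomp := hg.comp σ hds
    have heq : y =ᶠ[nhds σ] fun ρ => z (s ρ) / (z (s ρ) - c1 * s ρ) := hyloc
    have := hcomp.congr_of_eventuallyEq heq
    refine this.congr_deriv (Eq.symm ?_)
    rw [hw1_def]
    field_simp
    ring
  have hDy : DifferentiableAt ℂ y (t ^ 2) := hED.self_of_nhds.differentiableAt
  have hdy : deriv y =ᶠ[nhds (t ^ 2)] fun σ => w1 (s σ) := by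
    filter_upwards [hED] with σ h; exact h.deriv
  -- second derivative: differentiate w1 ∘ s at t²
  have hzc : z t - c1 * t ≠ 0 := by
    have := hzne2 t htU; intro h; apply this; linear_combination -h
  have hdenne : (z t - c1 * t) ^ 2 * (2 * t) ≠ 0 :=
    mul_ne_zero (pow_ne_zero 2 hzc) (by simpa using ht0)
  have hnum : HasDerivAt (fun u => c1 * (z u - u * deriv z u))
      (c1 * (deriv z t - (1 * deriv z t + t * deriv (deriv z) t))) t :=
    (((hz1 t htU).hasDerivAt).sub
      ((hasDerivAt_id t).mul ((hz2 t htU).hasDerivAt))).const_mul c1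
  have hden : HasDerivAt (fun u => (z u - c1 * u) ^ 2 * (2 * u))
      (((2 : ℕ) : ℂ) * (z t - c1 * t) ^ 1 * (deriv z t - c1 * 1) * (2 * t)
        + (z t - c1 * t) ^ 2 * 2) t := by
    have h1 : HasDerivAt (fun u => (z u - c1 * u) ^ 2)
        (((2 : ℕ) : ℂ) * (z t - c1 * t) ^ 1 * (deriv z t - c1 * 1)) t :=
      (((hz1 t htU).hasDerivAt).sub ((hasDerivAt_id t).const_mul c1)).pow 2
    have h2 : HasDerivAt (fun u : ℂ => 2 * u) 2 t := by
      simpa using (hasDerivAt_id t).const_mul (2 : ℂ)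
    exact h1.mul h2
  have hw1d : HasDerivAt w1
      ((c1 * (deriv z t - (1 * deriv z t + t * deriv (deriv z) t))
          * ((z t - c1 * t) ^ 2 * (2 * t))
        - c1 * (z t - t * deriv z t)
          * (((2 : ℕ) : ℂ) * (z t - c1 * t) ^ 1 * (deriv z t - c1 * 1) * (2 * t)
            + (z t - c1 * t) ^ 2 * 2))
        / ((z t - c1 * t) ^ 2 * (2 * t)) ^ 2) t := hnum.div hden hdenne
  have hsdt : HasDerivAt s (1 / (2 * t)) (t ^ 2) := by
    have := hsd.self_of_nhds.1
    rwa [hst] at this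
  have hcomp2 : HasDerivAt (fun σ => w1 (s σ))
      (((c1 * (deriv z t - (1 * deriv z t + t * deriv (deriv z) t))
          * ((z t - c1 * t) ^ 2 * (2 * t))
        - c1 * (z t - t * deriv z t)
          * (((2 : ℕ) : ℂ) * (z t - c1 * t) ^ 1 * (deriv z t - c1 * 1) * (2 * t)
            + (z t - c1 * t) ^ 2 * 2))
        / ((z t - c1 * t) ^ 2 * (2 * t)) ^ 2) * (1 / (2 * t))) (t ^ 2) := by
    have h := hw1d
    rw [← hst] at h
    have h2 := h.comp (t ^ 2) hsdt
    rwa [hst] at h2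
  have hDdy : DifferentiableAt ℂ (deriv y) (t ^ 2) :=
    hcomp2.differentiableAt.congr_of_eventuallyEq hdy
  refine ⟨hDy, hDdy, ?_⟩
  have hddy : deriv (deriv y) (t ^ 2) = deriv (fun σ => w1 (s σ)) (t ^ 2) :=
    hdy.deriv_eq
  rw [hddy, hcomp2.deriv]
  have hyv : y (t ^ 2) = z t / (z t - c1 * t) := hy t htU
  have hdyv : deriv y (t ^ 2) = w1 t := by
    have := hED.self_of_nhds.deriv
    rwa [hst] at this
  rw [hyv, hdyv]
  simp only [hw1_def]
  have hZ : z t ≠ 0 := hzne t htU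
  have hZ2f : deriv (deriv z) t =
      (-(t*(c1*t - 2*z t)*(deriv z t)^2) - 2*(z t)^2*(deriv z t) - 16*(z t)^2*(z t-c1*t)^2
        + (c1+4*th0*thI)*(z t)*(z t-c1*t) - t*(z t)*((th0-c1*thI)^2-c1^2)
        - t*(z t-c1*t)*(th0+c1*thI)^2)
      / (2*t*(z t)*(z t-c1*t)) := by
    rw [hzeq t htU]
    exact alg2 t (z t) (deriv z t) th0 thI c1 ht0 hZ hzc (hzne2 t htU)
  exact alg t (z t) (deriv z t) (deriv (deriv z) t) th0 thI c1 ht0 hZ hc1 hzc hZ2f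
end
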